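/- arXiv:1804.00437 — 14 statements merged into one kernel-verified Lean document; each statement's English description precedes it below -/
import Mathlib

section
/- Fix an integer n ≥ 1 and reals λ > 0, γ > 0, and let v ∈ ℝ^n with v_j ≥ 0 for all j. Let κ ∈ ℝ^n be nonzero and set J := {j ∈ [n] : κ_j ≠ 0}. For any vector p ∈ ℝ^n with p_j ≥ 0, Σ_{j=1}^n p_j = 1 and p_j > 0 for all j ∈ J, define θ(κ,p) := nλγ·(Σ_{j∈J} κ_j²) / (Σ_{j∈J} κ_j²·(v_j + nλγ)/p_j). Then the vector p* defined by p*_j := |κ_j|·√(v_j + nλγ) / (Σ_{k=1}^n |κ_k|·√(v_k + nλγ)) is a maximizer: p*_j ≥ 0 for all j, Σ_{j=1}^n p*_j = 1, p*_j > 0 for all j ∈ J, and θ(κ,p) ≤ θ(κ,p*) for every p ∈ ℝ^n with p_j ≥ 0, Σ_{j=1}^n p_j = 1 and p_j > 0 for all j ∈ J. -/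
/-- **Lemma 2.4 (AdaSDCA, optimal relaxed adaptive probabilities).**
The vector `p*` with `p*_j ∝ |κ_j|·√(v_j + nλγ)` maximizes
`θ(κ,p) = nλγ·(Σ_{j∈J} κ_j²) / (Σ_{j∈J} κ_j²(v_j + nλγ)/p_j)`
over all probability vectors `p` that are positive on `J = {j : κ_j ≠ 0}`. -/
theorem stmt_0 (n : ℕ) (hn : 1 ≤ n) (lam γ : ℝ) (hlam : 0 < lam) (hγ : 0 < γ)
    (v : Fin n → ℝ) (hv : ∀ j, 0 ≤ v j)
    (κ : Fin n → ℝ) (hκ : κ ≠ 0)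
    (J : Finset (Fin n)) (hJ : J = Finset.univ.filter (fun j => κ j ≠ 0))
    (θ : (Fin n → ℝ) → ℝ)
    (hθ : ∀ p, θ p = (n * lam * γ * ∑ j ∈ J, (κ j) ^ 2) /
        (∑ j ∈ J, (κ j) ^ 2 * (v j + n * lam * γ) / p j))
    (pstar : Fin n → ℝ)
    (hpstar : ∀ j, pstar j = |κ j| * Real.sqrt (v j + n * lam * γ) /
        (∑ k, |κ k| * Real.sqrt (v k + n * lam * γ))) :
    (∀ j, 0 ≤ pstar j) ∧ (∑ j, pstar j = 1) ∧ (∀ j ∈ J, 0 < pstar j) ∧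
      ∀ p : Fin n → ℝ, (∀ j, 0 ≤ p j) → (∑ j, p j = 1) → (∀ j ∈ J, 0 < p j) →
        θ p ≤ θ pstar := by
  set c : ℝ := n * lam * γ with hc
  have hcpos : 0 < c := by
    have : (1:ℝ) ≤ n := by exact_mod_cast hn
    have := mul_pos hlam hγ
    positivity
  have hvc : ∀ j, 0 < v j + c := fun j => by have := hv j; linarith
  set a : Fin n → ℝ := fun j => |κ j| * Real.sqrt (v j + c) with ha
  have hanneg : ∀ j, 0 ≤ a j := fun j =>
    mul_nonneg (abs_nonneg _) (Real.sqrt_nonneg _)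
  have hasq : ∀ j, a j ^ 2 = κ j ^ 2 * (v j + c) := by
    intro j
    simp only [ha, mul_pow, sq_abs, Real.sq_sqrt (hvc j).le]
  have hapos : ∀ j ∈ J, 0 < a j := by
    intro j hj
    rw [hJ, Finset.mem_filter] at hj
    exact mul_pos (abs_pos.mpr hj.2) (Real.sqrt_pos.mpr (hvc j))
  set S : ℝ := ∑ k, a k with hS
  have hSpos : 0 < S := by
    obtain ⟨j, hj⟩ : ∃ j, κ j ≠ 0 := by
      by_contra h
      push_neg at h
      exact hκ (funext fun j => h j)
    have hjJ : j ∈ J := by rw [hJ]; simp [hj]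
    exact Finset.sum_pos' (fun i _ => hanneg i) ⟨j, Finset.mem_univ j, hapos j hjJ⟩
  have hps : ∀ j, pstar j = a j / S := fun j => hpstar j
  have h1 : ∀ j, 0 ≤ pstar j := fun j => by
    rw [hps]; exact div_nonneg (hanneg j) hSpos.le
  have h2 : ∑ j, pstar j = 1 := by
    simp only [hps]
    rw [← Finset.sum_div, ← hS, div_self hSpos.ne']
  have h3 : ∀ j ∈ J, 0 < pstar j := fun j hj => by
    rw [hps]; exact div_pos (hapos j hj) hSpos
  -- sum over J of a equals S
  have hSJ : ∑ j ∈ J, a j = S := by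
    rw [hS]
    apply Finset.sum_subset (Finset.subset_univ J)
    intro j _ hj
    rw [hJ, Finset.mem_filter] at hj
    push_neg at hj
    have : κ j = 0 := hj (Finset.mem_univ j)
    simp [ha, this]
  have hDstar : (∑ j ∈ J, (κ j) ^ 2 * (v j + c) / pstar j) = S ^ 2 := by
    have : ∀ j ∈ J, (κ j) ^ 2 * (v j + c) / pstar j = a j * S := by
      intro j hj
      rw [← hasq, hps, div_div_eq_mul_div, sq, mul_assoc,
        mul_div_cancel_left₀ _ (hapos j hj).ne']
    rw [Finset.sum_congr rfl this, ← Finset.sum_mul, hSJ, pow_two]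
  refine ⟨h1, h2, h3, ?_⟩
  intro p hp0 hp1 hpJ
  have hNum : 0 ≤ c * ∑ j ∈ J, (κ j) ^ 2 := by
    apply mul_nonneg hcpos.le
    exact Finset.sum_nonneg fun j _ => sq_nonneg _
  -- Cauchy-Schwarz: S^2 ≤ ∑_J κ²(v+c)/p
  have hCS : S ^ 2 ≤ ∑ j ∈ J, (κ j) ^ 2 * (v j + c) / p j := by
    have key : (∑ j ∈ J, Real.sqrt (p j) * (a j / Real.sqrt (p j))) ^ 2 ≤
        (∑ j ∈ J, Real.sqrt (p j) ^ 2) * ∑ j ∈ J, (a j / Real.sqrt (p j)) ^ 2 :=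
      Finset.sum_mul_sq_le_sq_mul_sq J _ _
    have e1 : ∑ j ∈ J, Real.sqrt (p j) * (a j / Real.sqrt (p j)) = S := by
      rw [← hSJ]
      apply Finset.sum_congr rfl
      intro j hj
      rw [mul_div_cancel₀]
      exact (Real.sqrt_pos.mpr (hpJ j hj)).ne'
    have e2 : ∑ j ∈ J, Real.sqrt (p j) ^ 2 ≤ 1 := by
      rw [← hp1]
      calc ∑ j ∈ J, Real.sqrt (p j) ^ 2 = ∑ j ∈ J, p j := by
            exact Finset.sum_congr rfl fun j _ => Real.sq_sqrt (hp0 j)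
        _ ≤ ∑ j, p j := Finset.sum_le_sum_of_subset_of_nonneg
            (Finset.subset_univ J) (fun j _ _ => hp0 j)
    have e3 : ∑ j ∈ J, (a j / Real.sqrt (p j)) ^ 2 =
        ∑ j ∈ J, (κ j) ^ 2 * (v j + c) / p j := by
      apply Finset.sum_congr rfl
      intro j hj
      rw [div_pow, hasq, Real.sq_sqrt (hp0 j)]
    have e3nn : 0 ≤ ∑ j ∈ J, (a j / Real.sqrt (p j)) ^ 2 :=
      Finset.sum_nonneg fun j _ => sq_nonneg _
    calc S ^ 2 = (∑ j ∈ J, Real.sqrt (p j) * (a j / Real.sqrt (p j))) ^ 2 := by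
          rw [e1]
      _ ≤ (∑ j ∈ J, Real.sqrt (p j) ^ 2) * ∑ j ∈ J, (a j / Real.sqrt (p j)) ^ 2 := key
      _ ≤ 1 * ∑ j ∈ J, (a j / Real.sqrt (p j)) ^ 2 := by
          exact mul_le_mul_of_nonneg_right e2 e3nn
      _ = ∑ j ∈ J, (κ j) ^ 2 * (v j + c) / p j := by rw [one_mul, e3]
  rw [hθ p, hθ pstar, hDstar]
  have hS2 : (0:ℝ) < S ^ 2 := by positivity
  exact div_le_div_of_nonneg_left hNum hS2 hCS
end

section
/- Let n, d, m ≥ 1 be integers, let X_1,…,X_n ∈ ℝ^{d×m} be matrices, let λ > 0, and for each j ∈ {1,…,n} let φ_j : ℝ^m → ℝ be convex, differentiable, and l_j-smooth with l_j > 0, i.e. ‖∇φ_j(x) − ∇φ_j(y)‖ ≤ l_j·‖x − y‖ for all x, y ∈ ℝ^m. Define P(w) := (1/n)·Σ_{j=1}^n φ_j(X_j^T w) + (λ/2)·‖w‖² for w ∈ ℝ^d, and let w* be a global minimizer of P. Then for every w ∈ ℝ^d: (1/n)·Σ_{j=1}^n (1/l_j)·‖∇φ_j(X_j^T w) − ∇φ_j(X_j^T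 w*)‖² ≤ 2·(P(w) − P(w*) − (λ/2)·‖w − w*‖²). -/
/-! For a convex `L`-smooth `f`, comparing the first-order lower bound with the descent-lemma
upper bound at the gradient step `y - (∇f y - ∇f x) / L` gives cocoercivity:
`f x + ⟪∇f x, y - x⟫ + ‖∇f y - ∇f x‖² / (2L) ≤ f y`. Apply it to each loss with `x = X_jᵀ w*`
and `y = X_jᵀ w` and average: the linear terms are cancelled by the optimality condition
`∇P(w*) = 0`, since `‖w‖² - ‖w*‖² - ‖w - w*‖² = 2⟪w*, w - w*⟫`. -/

/-- `A^T w` for `A ∈ ℝ^{d×m}`, `w ∈ ℝ^d`, as an element of `ℝ^m`. -/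
noncomputable def XTvec {d m : ℕ} (A : Matrix (Fin d) (Fin m) ℝ)
    (w : EuclideanSpace ℝ (Fin d)) : EuclideanSpace ℝ (Fin m) :=
  WithLp.toLp 2 (fun i => ∑ k, A k i * w k)

open scoped RealInnerProductSpace
open Set

section Smooth

variable {F : Type*} [NormedAddCommGroup F] [InnerProductSpace ℝ F] [CompleteSpace F] {f : F → ℝ}

theorem hasDerivAt_comp_add_smul (hf : Differentiable ℝ f) (x v : F) (t : ℝ) :
    HasDerivAt (fun s : ℝ => f (x + s • v)) ⟪gradient f (x + t • v), v⟫ t := by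
  have hline : HasDerivAt (fun s : ℝ => x + s • v) v t := by
    simpa using ((hasDerivAt_id t).smul_const v).const_add x
  simpa [Function.comp_def] using (hf _).hasGradientAt.hasFDerivAt.comp_hasDerivAt t hline

theorem ConvexOn.add_inner_gradient_le (hconv : ConvexOn ℝ univ f) (hf : Differentiable ℝ f)
    (x v : F) : f x + ⟪gradient f x, v⟫ ≤ f (x + v) := by
  have hline : ConvexOn ℝ univ (fun s : ℝ => f (x + s • v)) := by
    simpa [Function.comp_def] using
      (hconv.translate_right x).comp_linearMap (LinearMap.toSpanSingleton ℝ F v)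
  have hderiv := hasDerivAt_comp_add_smul hf x v 0
  rw [zero_smul, add_zero] at hderiv
  have hslope := hline.le_slope_of_hasDerivAt (mem_univ 0) (mem_univ 1) zero_lt_one hderiv
  simp only [slope_def_field, zero_smul, add_zero, one_smul, sub_zero, div_one] at hslope
  linarith

theorem le_add_inner_gradient_add_sq_of_lipschitz (hf : Differentiable ℝ f) {L : ℝ}
    (hlip : ∀ x y, ‖gradient f x - gradient f y‖ ≤ L * ‖x - y‖) (x v : F) :
    f (x + v) ≤ f x + ⟪gradient f x, v⟫ + L / 2 * ‖v‖ ^ 2 := by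
  set g : ℝ → ℝ := fun t => f (x + t • v) - t * ⟪gradient f x, v⟫ - L / 2 * t ^ 2 * ‖v‖ ^ 2
  have hg : ∀ t, HasDerivAt g (⟪gradient f (x + t • v) - gradient f x, v⟫ - L * t * ‖v‖ ^ 2) t :=
    fun t => (((hasDerivAt_comp_add_smul hf x v t).sub
      ((hasDerivAt_id t).mul_const ⟪gradient f x, v⟫)).sub
      (((hasDerivAt_pow 2 t).const_mul (L / 2)).mul_const (‖v‖ ^ 2))).congr_deriv
      (by rw [inner_sub_left]; ring)
  have hanti : AntitoneOn g (Ici 0) := by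
    refine antitoneOn_of_hasDerivWithinAt_nonpos (convex_Ici 0)
      (fun t _ => (hg t).continuousAt.continuousWithinAt) (fun t _ => (hg t).hasDerivWithinAt)
      fun t ht => sub_nonpos.mpr ?_
    rw [interior_Ici] at ht
    calc ⟪gradient f (x + t • v) - gradient f x, v⟫
        ≤ ‖gradient f (x + t • v) - gradient f x‖ * ‖v‖ := real_inner_le_norm _ _
      _ ≤ L * ‖t • v‖ * ‖v‖ := by
          gcongr
          simpa using hlip (x + t • v) x
      _ = L * t * ‖v‖ ^ 2 := by rw [norm_smul, Real.norm_of_nonneg ht.le]; ring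
  have hg01 : g 1 ≤ g 0 := hanti self_mem_Ici (mem_Ici.mpr zero_le_one) zero_le_one
  simp only [g, one_smul, zero_smul, add_zero] at hg01
  linarith

theorem ConvexOn.add_inner_gradient_add_sq_le (hconv : ConvexOn ℝ univ f)
    (hf : Differentiable ℝ f) {L : ℝ} (hL : 0 < L)
    (hlip : ∀ x y, ‖gradient f x - gradient f y‖ ≤ L * ‖x - y‖) (x y : F) :
    f x + ⟪gradient f x, y - x⟫ + ‖gradient f y - gradient f x‖ ^ 2 / (2 * L) ≤ f y := by
  set d := gradient f y - gradient f x
  have hlower := hconv.add_inner_gradient_le hf x (y - x - L⁻¹ • d)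
  have hupper := le_add_inner_gradient_add_sq_of_lipschitz hf hlip y (-(L⁻¹ • d))
  have hpoint : x + (y - x - L⁻¹ • d) = y + -(L⁻¹ • d) := by abel
  have hd : L⁻¹ * ⟪gradient f y, d⟫ - L⁻¹ * ⟪gradient f x, d⟫ = L⁻¹ * ‖d‖ ^ 2 := by
    rw [← mul_sub, ← inner_sub_left, real_inner_self_eq_norm_sq]
  rw [hpoint] at hlower
  rw [inner_sub_right, real_inner_smul_right] at hlower
  rw [inner_neg_right, real_inner_smul_right, norm_neg, norm_smul,
    Real.norm_of_nonneg (inv_nonneg.mpr hL.le)] at hupper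
  have hsq : ‖d‖ ^ 2 / (2 * L) = L⁻¹ * ‖d‖ ^ 2 - L / 2 * (L⁻¹ * ‖d‖) ^ 2 := by
    field_simp; ring
  linarith

end Smooth

section RegularizedRisk

variable {ι E F : Type*} [Fintype ι] [NormedAddCommGroup E] [InnerProductSpace ℝ E]
  [NormedAddCommGroup F] [InnerProductSpace ℝ F] [CompleteSpace F]

noncomputable def regularizedRisk (A : ι → E →ₗ[ℝ] F) (φ : ι → F → ℝ) (c lam : ℝ) (w : E) : ℝ :=
  c * ∑ j, φ j (A j w) + lam / 2 * ‖w‖ ^ 2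

theorem IsLocalMin.sum_inner_gradient_add_inner_eq_zero {A : ι → E →ₗ[ℝ] F} {φ : ι → F → ℝ}
    {c lam : ℝ} {w₀ : E} (hmin : IsLocalMin (regularizedRisk A φ c lam) w₀)
    (hdiff : ∀ j, Differentiable ℝ (φ j)) (v : E) :
    c * ∑ j, ⟪gradient (φ j) (A j w₀), A j v⟫ + lam * ⟪w₀, v⟫ = 0 := by
  have hline : HasDerivAt (fun t : ℝ => regularizedRisk A φ c lam (w₀ + t • v))
      (c * ∑ j, ⟪gradient (φ j) (A j w₀), A j v⟫ + lam * ⟪w₀, v⟫) 0 := by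
    have hsum := HasDerivAt.fun_sum (u := Finset.univ)
      fun j _ => hasDerivAt_comp_add_smul (hdiff j) (A j w₀) (A j v) 0
    have hnorm := (((hasDerivAt_id (0 : ℝ)).smul_const v).const_add w₀).norm_sq
    simp only [zero_smul, add_zero, id, one_smul] at hsum hnorm
    have hfun : (fun t : ℝ => regularizedRisk A φ c lam (w₀ + t • v)) =
        fun t => c * ∑ j, φ j (A j w₀ + t • A j v) + lam / 2 * ‖w₀ + t • v‖ ^ 2 := by
      funext t; simp [regularizedRisk]
    rw [hfun]
    exact ((hsum.const_mul c).add (hnorm.const_mul (lam / 2))).congr_deriv (by ring)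
  have hmin' : IsLocalMin (regularizedRisk A φ c lam) ((fun t : ℝ => w₀ + t • v) 0) := by
    simpa using hmin
  exact (hmin'.comp_continuous (g := fun t : ℝ => w₀ + t • v) (by fun_prop)).hasDerivAt_eq_zero
    hline

theorem IsLocalMin.sum_inv_mul_norm_gradient_sub_sq_le {A : ι → E →ₗ[ℝ] F} {φ : ι → F → ℝ}
    {c lam : ℝ} {w₀ : E} {l : ι → ℝ} (hmin : IsLocalMin (regularizedRisk A φ c lam) w₀)
    (hc : 0 ≤ c) (hl : ∀ j, 0 < l j) (hconv : ∀ j, ConvexOn ℝ univ (φ j))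
    (hdiff : ∀ j, Differentiable ℝ (φ j))
    (hsmooth : ∀ j x y, ‖gradient (φ j) x - gradient (φ j) y‖ ≤ l j * ‖x - y‖) (w : E) :
    c * ∑ j, (1 / l j) * ‖gradient (φ j) (A j w) - gradient (φ j) (A j w₀)‖ ^ 2 ≤
      2 * (regularizedRisk A φ c lam w - regularizedRisk A φ c lam w₀ -
        lam / 2 * ‖w - w₀‖ ^ 2) := by
  have hgap : regularizedRisk A φ c lam w - regularizedRisk A φ c lam w₀ - lam / 2 * ‖w - w₀‖ ^ 2
      = c * ∑ j, (φ j (A j w) - φ j (A j w₀) - ⟪gradient (φ j) (A j w₀), A j (w - w₀)⟫) := by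
    have hopt := hmin.sum_inner_gradient_add_inner_eq_zero hdiff (w - w₀)
    rw [inner_sub_right, real_inner_self_eq_norm_sq, real_inner_comm] at hopt
    simp only [regularizedRisk, Finset.sum_sub_distrib, mul_sub, norm_sub_sq_real]
    linarith
  have hterm : ∀ j, (1 / l j) * ‖gradient (φ j) (A j w) - gradient (φ j) (A j w₀)‖ ^ 2 ≤
      2 * (φ j (A j w) - φ j (A j w₀) - ⟪gradient (φ j) (A j w₀), A j (w - w₀)⟫) := by
    intro j
    have hcoco := (hconv j).add_inner_gradient_add_sq_le (hdiff j) (hl j) (hsmooth j)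
      (A j w₀) (A j w)
    rw [← map_sub] at hcoco
    have hhalf : 1 / l j * ‖gradient (φ j) (A j w) - gradient (φ j) (A j w₀)‖ ^ 2 =
        2 * (‖gradient (φ j) (A j w) - gradient (φ j) (A j w₀)‖ ^ 2 / (2 * l j)) := by
      field_simp [(hl j).ne']
    linarith
  rw [hgap, mul_left_comm]
  refine mul_le_mul_of_nonneg_left ?_ hc
  rw [Finset.mul_sum]
  exact Finset.sum_le_sum fun j _ => hterm j

end RegularizedRisk

theorem XTvec_eq_toLpLin_transpose {d m : ℕ} (A : Matrix (Fin d) (Fin m) ℝ) :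
    XTvec A = Matrix.toLpLin 2 2 A.transpose := by
  funext w
  ext i
  simp [XTvec, Matrix.toLpLin_apply, Matrix.mulVec, dotProduct]

theorem stmt_1_general (n d m : ℕ)
    (X : Fin n → Matrix (Fin d) (Fin m) ℝ) (lam : ℝ)
    (φ : Fin n → EuclideanSpace ℝ (Fin m) → ℝ) (l : Fin n → ℝ)
    (hl : ∀ j, 0 < l j)
    (hconv : ∀ j, ConvexOn ℝ Set.univ (φ j))
    (hdiff : ∀ j, Differentiable ℝ (φ j))
    (hsmooth : ∀ j, ∀ x y : EuclideanSpace ℝ (Fin m),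
      ‖gradient (φ j) x - gradient (φ j) y‖ ≤ l j * ‖x - y‖)
    (P : EuclideanSpace ℝ (Fin d) → ℝ)
    (hP : ∀ w, P w = (1 / n) * ∑ j, φ j (XTvec (X j) w) + lam / 2 * ‖w‖ ^ 2)
    (wstar : EuclideanSpace ℝ (Fin d)) (hmin : ∀ w, P wstar ≤ P w) :
    ∀ w : EuclideanSpace ℝ (Fin d),
      (1 / n) * ∑ j, (1 / l j) *
          ‖gradient (φ j) (XTvec (X j) w) - gradient (φ j) (XTvec (X j) wstar)‖ ^ 2
        ≤ 2 * (P w - P wstar - lam / 2 * ‖w - wstar‖ ^ 2) := by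
  have hPrisk :
      P = regularizedRisk (fun j => Matrix.toLpLin 2 2 (X j).transpose) φ (1 / n) lam := by
    funext w
    simp only [hP, regularizedRisk, XTvec_eq_toLpLin_transpose]
  have hlocal : IsLocalMin P wstar := Filter.Eventually.of_forall hmin
  rw [hPrisk] at hlocal ⊢
  simpa only [XTvec_eq_toLpLin_transpose] using
    hlocal.sum_inv_mul_norm_gradient_sub_sq_le (by positivity) hl hconv hdiff hsmooth

/-- **Lemma 3.4 (dfSDCA, convex losses).** For convex, `l_j`-smooth losses `φ_j` and the
L2-regularized ERM objective `P`, the weighted sum of squared gradient differences is bounded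
by `2(P(w) − P(w*) − (λ/2)‖w − w*‖²)`. -/
theorem stmt_1 (n d m : ℕ) (hn : 1 ≤ n) (hd : 1 ≤ d) (hm : 1 ≤ m)
    (X : Fin n → Matrix (Fin d) (Fin m) ℝ) (lam : ℝ) (hlam : 0 < lam)
    (φ : Fin n → EuclideanSpace ℝ (Fin m) → ℝ) (l : Fin n → ℝ)
    (hl : ∀ j, 0 < l j)
    (hconv : ∀ j, ConvexOn ℝ Set.univ (φ j))
    (hdiff : ∀ j, Differentiable ℝ (φ j))
    (hsmooth : ∀ j, ∀ x y : EuclideanSpace ℝ (Fin m),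
      ‖gradient (φ j) x - gradient (φ j) y‖ ≤ l j * ‖x - y‖)
    (P : EuclideanSpace ℝ (Fin d) → ℝ)
    (hP : ∀ w, P w = (1 / n) * ∑ j, φ j (XTvec (X j) w) + lam / 2 * ‖w‖ ^ 2)
    (wstar : EuclideanSpace ℝ (Fin d)) (hmin : ∀ w, P wstar ≤ P w) :
    ∀ w : EuclideanSpace ℝ (Fin d),
      (1 / n) * ∑ j, (1 / l j) *
          ‖gradient (φ j) (XTvec (X j) w) - gradient (φ j) (XTvec (X j) wstar)‖ ^ 2
        ≤ 2 * (P w - P wstar - lam / 2 * ‖w - wstar‖ ^ 2) :=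
  stmt_1_general n d m X lam φ l hl hconv hdiff hsmooth P hP wstar hmin
end

section
/- Let n ≥ 1, τ ≥ 1, and let B_1,…,B_τ be a partition of [n] into nonempty sets (buckets). Let p ∈ ℝ^n satisfy p_j ≥ 0 for all j and Σ_{j∈B_l} p_j = 1 for every l ∈ [τ]. Define the matrix P ∈ ℝ^{n×n} by P_{jj} := p_j; P_{jk} := p_j·p_k if j ≠ k lie in two different buckets; and P_{jk} := 0 if j ≠ k lie in the same bucket. Let X ∈ ℝ^{d×n}, and for each i ∈ [d] set J_i := {j ∈ [n] : X_{ij} ≠ 0}, δ_i := Σ_{j∈J_i} p_j, and ω'_i := #{l ∈ [τ] : J_i ∩ B_l ≠ ∅}. For each j ∈ [n] define v_j := Σ_{i : X_{ij} ≠ 0} (1 + (1 − 1/ω'_i)·δ_i)·X_{ij}². Then for every h ∈ ℝ^n: Σ_{j=1}^n Σ_{k=1}^n P_{jk}·h_j·h_k·⟨X_{:j}, X_{:k}⟩ ≤ Σ_{j=1}^n p_j·v_j·h_j². -/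
open Finset

set_option linter.unnecessarySeqFocus false
set_option linter.unusedVariables false

lemma offdiag_sum' {τ : ℕ} (f : Fin τ → ℝ) :
    ∑ l, ∑ l', (if l = l' then 0 else f l * f l') =
      (∑ l, f l) ^ 2 - ∑ l, f l ^ 2 := by
  have h1 : ∀ l : Fin τ, ∑ l', (if l = l' then (0:ℝ) else f l * f l')
      = f l * (∑ l', f l') - f l ^ 2 := by
    intro l
    have h2 : ∑ l', (if l = l' then (0:ℝ) else f l * f l')
        = ∑ l', (f l * f l' - if l = l' then f l * f l' else 0) := by
      apply Finset.sum_congr rfl; intro l' _; split_ifs <;> ring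
    rw [h2, Finset.sum_sub_distrib, ← Finset.mul_sum, Finset.sum_ite_eq]
    simp [pow_two]
  rw [Finset.sum_congr rfl fun l _ => h1 l, Finset.sum_sub_distrib, ← Finset.sum_mul, pow_two]

lemma key_eso {n τ : ℕ} (L : Fin n → Fin τ)
    (p : Fin n → ℝ) (hp : ∀ j, 0 ≤ p j)
    (J : Finset (Fin n)) (a : Fin n → ℝ) (ha : ∀ j ∉ J, a j = 0)
    (δ : ℝ) (hδ : δ = ∑ j ∈ J, p j)
    (ω : ℕ)
    (hω : ω = (univ.filter fun l => (J.filter fun j => L j = l).Nonempty).card) :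
    ∑ j, ∑ k, (if j = k then p j else if L j = L k then 0 else p j * p k) * a j * a k ≤
      (1 + (1 - 1/(ω:ℝ)) * δ) * ∑ j ∈ J, p j * a j ^ 2 := by
  classical
  rcases eq_or_ne J ∅ with hJ | hJ
  · have haz : ∀ j, a j = 0 := fun j => ha j (by simp [hJ])
    simp [haz, hJ]
  have hJne : J.Nonempty := Finset.nonempty_iff_ne_empty.mpr hJ
  set b : Fin n → ℝ := fun j => p j * a j with hb
  set s : Fin τ → ℝ := fun l => ∑ j ∈ J.filter (fun j => L j = l), p j * a j with hs
  set q : Fin τ → ℝ := fun l => ∑ j ∈ J.filter (fun j => L j = l), p j with hq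
  set t : Fin τ → ℝ := fun l => ∑ j ∈ J.filter (fun j => L j = l), p j * a j ^ 2 with ht
  set r : Fin τ → ℝ := fun l => Real.sqrt (q l) * Real.sqrt (t l) with hr
  have hq0 : ∀ l, 0 ≤ q l := fun l => Finset.sum_nonneg fun j _ => hp j
  have ht0 : ∀ l, 0 ≤ t l := fun l =>
    Finset.sum_nonneg fun j _ => mul_nonneg (hp j) (sq_nonneg _)
  have hr0 : ∀ l, 0 ≤ r l := fun l => mul_nonneg (Real.sqrt_nonneg _) (Real.sqrt_nonneg _)
  have hfib : ∀ (f : Fin n → ℝ), (∀ j ∉ J, f j = 0) →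
      ∀ l, ∑ j ∈ univ.filter (fun j => L j = l), f j = ∑ j ∈ J.filter (fun j => L j = l), f j := by
    intro f hf l
    apply (Finset.sum_subset (Finset.filter_subset_filter _ (Finset.subset_univ J)) _).symm
    intro j hj hj'
    simp only [Finset.mem_filter, Finset.mem_univ, true_and] at hj hj'
    exact hf j (fun hJ => hj' ⟨hJ, hj⟩)
  have hb0 : ∀ j ∉ J, b j = 0 := fun j hj => by simp [hb, ha j hj]
  -- Step 1: split LHS
  have hsplit : ∑ j, ∑ k, (if j = k then p j else if L j = L k then 0 else p j * p k) * a j * a k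
      = (∑ j, p j * a j ^ 2) + ∑ j, ∑ k, (if L j = L k then 0 else b j * b k) := by
    rw [← Finset.sum_add_distrib]
    apply Finset.sum_congr rfl; intro j _
    have h3 : p j * a j ^ 2 = ∑ k, if j = k then p j * a j * a k else 0 := by
      rw [Finset.sum_ite_eq]; simp [pow_two]; ring
    rw [h3, ← Finset.sum_add_distrib]
    apply Finset.sum_congr rfl; intro k _
    by_cases hjk : j = k
    · subst hjk; simp
    · simp only [hjk, if_false]
      split_ifs <;> simp [hb] <;> ring
  rw [hsplit]
  -- Step 2: off-diagonal sum equals (∑ s)² - ∑ s²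
  have hsumb : ∑ j, b j = ∑ l, s l := by
    rw [← Finset.sum_fiberwise univ L b]
    exact Finset.sum_congr rfl fun l _ => hfib b hb0 l
  have hdiagsum : ∑ j, ∑ k, (if L j = L k then b j * b k else 0) = ∑ l, s l ^ 2 := by
    have h1 : ∀ j, ∑ k, (if L j = L k then b j * b k else 0) = b j * s (L j) := by
      intro j
      have h2 : ∀ k, (if L j = L k then b j * b k else 0)
          = b j * (if L k = L j then b k else 0) := by
        intro k
        rcases eq_or_ne (L k) (L j) with h | h
        · simp [h]
        · simp [h, Ne.symm h]
      simp_rw [h2, ← Finset.mul_sum]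
      rw [show (∑ k, if L k = L j then b k else 0)
          = ∑ k ∈ univ.filter (fun k => L k = L j), b k from (Finset.sum_filter _ _).symm,
        hfib b hb0 (L j)]
    rw [Finset.sum_congr rfl fun j _ => h1 j]
    rw [← Finset.sum_fiberwise univ L (fun j => b j * s (L j))]
    apply Finset.sum_congr rfl; intro l _
    have h4 : ∑ j ∈ univ.filter (fun j => L j = l), b j * s (L j)
        = ∑ j ∈ univ.filter (fun j => L j = l), b j * s l := by
      apply Finset.sum_congr rfl; intro j hj
      simp only [Finset.mem_filter] at hj
      rw [hj.2]
    rw [h4, ← Finset.sum_mul, hfib b hb0 l, pow_two]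
  have hoff : ∑ j, ∑ k, (if L j = L k then 0 else b j * b k)
      = (∑ l, s l) ^ 2 - ∑ l, s l ^ 2 := by
    have h5 : ∀ j k, (if L j = L k then (0:ℝ) else b j * b k)
        = b j * b k - (if L j = L k then b j * b k else 0) := by
      intro j k; split_ifs <;> ring
    simp_rw [h5, Finset.sum_sub_distrib, ← Finset.mul_sum]
    rw [hdiagsum, ← Finset.sum_mul, hsumb, pow_two]
  rw [hoff]
  -- the RHS total sum over J:
  set T : ℝ := ∑ j ∈ J, p j * a j ^ 2 with hT
  have hT0 : 0 ≤ T := Finset.sum_nonneg fun j _ => mul_nonneg (hp j) (sq_nonneg _)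
  have hsumT : ∑ j, p j * a j ^ 2 = T :=
    (Finset.sum_subset (Finset.subset_univ J) fun j _ hj => by simp [ha j hj]).symm
  have hsumq : ∑ l, q l = δ := by rw [hδ, hq]; exact Finset.sum_fiberwise J L p
  have hsumt : ∑ l, t l = T := by rw [hT, ht]; exact Finset.sum_fiberwise J L _
  -- Cauchy-Schwarz per bucket: |s l| ≤ r l
  have hsr : ∀ l, |s l| ≤ r l := by
    intro l
    have hcs : s l ^ 2 ≤ q l * t l := by
      have h6 := Finset.sum_mul_sq_le_sq_mul_sq (J.filter (fun j => L j = l))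
        (fun j => Real.sqrt (p j)) (fun j => Real.sqrt (p j) * a j)
      calc s l ^ 2 = (∑ j ∈ J.filter (fun j => L j = l),
            Real.sqrt (p j) * (Real.sqrt (p j) * a j)) ^ 2 := by
            apply congrArg (· ^ 2); apply Finset.sum_congr rfl; intro j _
            rw [← mul_assoc, Real.mul_self_sqrt (hp j)]
        _ ≤ (∑ j ∈ J.filter (fun j => L j = l), Real.sqrt (p j) ^ 2) *
            ∑ j ∈ J.filter (fun j => L j = l), (Real.sqrt (p j) * a j) ^ 2 := h6
        _ = q l * t l := by
            congr 1
            · apply Finset.sum_congr rfl; intro j _; exact Real.sq_sqrt (hp j)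
            · apply Finset.sum_congr rfl; intro j _
              rw [mul_pow, Real.sq_sqrt (hp j)]
    calc |s l| = Real.sqrt (s l ^ 2) := (Real.sqrt_sq_eq_abs _).symm
      _ ≤ Real.sqrt (q l * t l) := Real.sqrt_le_sqrt hcs
      _ = r l := Real.sqrt_mul (hq0 l) (t l)
  -- bound the off-diagonal bucket sum by the same expression in r
  have hstep1 : (∑ l, s l) ^ 2 - ∑ l, s l ^ 2 ≤ (∑ l, r l) ^ 2 - ∑ l, r l ^ 2 := by
    rw [← offdiag_sum' s, ← offdiag_sum' r]
    apply Finset.sum_le_sum; intro l _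
    apply Finset.sum_le_sum; intro l' _
    split_ifs with h
    · exact le_rfl
    · calc s l * s l' ≤ |s l * s l'| := le_abs_self _
        _ = |s l| * |s l'| := abs_mul _ _
        _ ≤ r l * r l' := mul_le_mul (hsr l) (hsr l') (abs_nonneg _) (hr0 l)
  -- ω ≥ 1
  set Ls := univ.filter (fun l => (J.filter fun j => L j = l).Nonempty) with hLs
  have hω1 : 1 ≤ ω := by
    rw [hω]
    apply Finset.card_pos.mpr
    obtain ⟨j, hj⟩ := hJne
    exact ⟨L j, Finset.mem_filter.mpr ⟨Finset.mem_univ _,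
      ⟨j, Finset.mem_filter.mpr ⟨hj, rfl⟩⟩⟩⟩
  have hωR : (0:ℝ) < (ω:ℝ) := by exact_mod_cast Nat.lt_of_lt_of_le Nat.zero_lt_one hω1
  have hfrac : 0 ≤ 1 - 1/(ω:ℝ) := by
    have : 1/(ω:ℝ) ≤ 1 := by
      rw [div_le_one hωR]; exact_mod_cast hω1
    linarith
  -- support of r
  have hrsupp : ∀ l ∉ Ls, r l = 0 := by
    intro l hl
    have : J.filter (fun j => L j = l) = ∅ := by
      by_contra hne
      exact hl (Finset.mem_filter.mpr ⟨Finset.mem_univ _,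
        Finset.nonempty_iff_ne_empty.mpr hne⟩)
    simp [hr, hq, this]
  have hsum_r : ∑ l, r l = ∑ l ∈ Ls, r l :=
    (Finset.sum_subset (Finset.subset_univ _) fun l _ hl => hrsupp l hl).symm
  have hsq : (∑ l, r l) ^ 2 ≤ (ω:ℝ) * ∑ l, r l ^ 2 := by
    have h7 : (∑ l ∈ Ls, r l) ^ 2 ≤ (Ls.card : ℝ) * ∑ l ∈ Ls, r l ^ 2 := by
      exact sq_sum_le_card_mul_sum_sq
    have h8 : ∑ l ∈ Ls, r l ^ 2 ≤ ∑ l, r l ^ 2 :=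
      Finset.sum_le_sum_of_subset_of_nonneg (Finset.subset_univ _)
        (fun l _ _ => sq_nonneg _)
    rw [hsum_r, hω]
    calc (∑ l ∈ Ls, r l) ^ 2 ≤ (Ls.card : ℝ) * ∑ l ∈ Ls, r l ^ 2 := h7
      _ ≤ (Ls.card : ℝ) * ∑ l, r l ^ 2 := by
          apply mul_le_mul_of_nonneg_left h8 (Nat.cast_nonneg _)
      _ = _ := rfl
  have hstep2 : (∑ l, r l) ^ 2 - ∑ l, r l ^ 2 ≤ (1 - 1/(ω:ℝ)) * (∑ l, r l) ^ 2 := by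
    have h9 : (∑ l, r l) ^ 2 / (ω:ℝ) ≤ ∑ l, r l ^ 2 := by
      rw [div_le_iff₀ hωR]; linarith [hsq]
    have h10 : (1 - 1/(ω:ℝ)) * (∑ l, r l) ^ 2 = (∑ l, r l) ^ 2 - (∑ l, r l) ^ 2 / (ω:ℝ) := by
      rw [sub_mul, one_mul, one_div, inv_mul_eq_div]
    linarith
  -- Cauchy-Schwarz over buckets: (∑ r)² ≤ δ * T
  have hstep3 : (∑ l, r l) ^ 2 ≤ δ * T := by
    have h11 := Finset.sum_mul_sq_le_sq_mul_sq (univ : Finset (Fin τ))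
      (fun l => Real.sqrt (q l)) (fun l => Real.sqrt (t l))
    calc (∑ l, r l) ^ 2 ≤ (∑ l, Real.sqrt (q l) ^ 2) * ∑ l, Real.sqrt (t l) ^ 2 := h11
      _ = (∑ l, q l) * ∑ l, t l := by
          congr 1
          · exact Finset.sum_congr rfl fun l _ => Real.sq_sqrt (hq0 l)
          · exact Finset.sum_congr rfl fun l _ => Real.sq_sqrt (ht0 l)
      _ = δ * T := by rw [hsumq, hsumt]
  have hstep4 : (1 - 1/(ω:ℝ)) * (∑ l, r l) ^ 2 ≤ (1 - 1/(ω:ℝ)) * (δ * T) :=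
    mul_le_mul_of_nonneg_left hstep3 hfrac
  rw [hsumT]
  nlinarith [hstep1, hstep2, hstep4]


/-- **Theorem 4.3 (ESO inequality for bucket samplings).**
With `P` the probability matrix of the bucket sampling determined by the partition
`B_1,…,B_τ` of `[n]` and probabilities `p`, and with `v_j` as defined from the data matrix `X`,
we have `Σ_j Σ_k P_{jk} h_j h_k ⟨X_{:j}, X_{:k}⟩ ≤ Σ_j p_j v_j h_j²` for every `h`. -/
theorem stmt_2 (n τ d : ℕ) (hn : 0 < n) (hτ : 0 < τ)
    (B : Fin τ → Finset (Fin n))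
    (hBne : ∀ l, (B l).Nonempty)
    (hBdisj : ∀ l l', l ≠ l' → Disjoint (B l) (B l'))
    (hBcover : ∀ j : Fin n, ∃ l, j ∈ B l)
    (p : Fin n → ℝ) (hp : ∀ j, 0 ≤ p j)
    (hpsum : ∀ l, ∑ j ∈ B l, p j = 1)
    (X : Matrix (Fin d) (Fin n) ℝ)
    (Pm : Fin n → Fin n → ℝ)
    (hPm : ∀ j k, Pm j k =
      if j = k then p j
      else if ∃ l, j ∈ B l ∧ k ∈ B l then 0
      else p j * p k)
    (δ : Fin d → ℝ)
    (hδ : ∀ i, δ i = ∑ j ∈ Finset.univ.filter (fun j => X i j ≠ 0), p j)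
    (ω : Fin d → ℕ)
    (hω : ∀ i, ω i =
      (Finset.univ.filter fun l =>
        ((Finset.univ.filter fun j => X i j ≠ 0) ∩ B l).Nonempty).card)
    (v : Fin n → ℝ)
    (hv : ∀ j, v j = ∑ i ∈ Finset.univ.filter (fun i => X i j ≠ 0),
      (1 + (1 - 1 / (ω i : ℝ)) * δ i) * (X i j) ^ 2) :
    ∀ h : Fin n → ℝ,
      ∑ j, ∑ k, Pm j k * h j * h k * (∑ i, X i j * X i k) ≤
        ∑ j, p j * v j * (h j) ^ 2 := by
  classical
  intro h
  -- bucket assignment function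
  set L : Fin n → Fin τ := fun j => (hBcover j).choose with hLdef
  have hL : ∀ j, j ∈ B (L j) := fun j => (hBcover j).choose_spec
  have hmem : ∀ (j : Fin n) (l : Fin τ), j ∈ B l ↔ L j = l := by
    intro j l
    constructor
    · intro hjl
      by_contra hne
      exact (Finset.disjoint_left.mp (hBdisj _ _ hne) (hL j)) hjl
    · intro he; rw [← he]; exact hL j
  have hiff : ∀ j k : Fin n, (∃ l, j ∈ B l ∧ k ∈ B l) ↔ L j = L k := by
    intro j k
    constructor
    · rintro ⟨l, hjl, hkl⟩
      rw [(hmem j l).mp hjl, (hmem k l).mp hkl]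
    · intro he
      exact ⟨L k, by rw [← he]; exact hL j, hL k⟩
  have hPm' : ∀ j k, Pm j k = if j = k then p j else if L j = L k then 0 else p j * p k := by
    intro j k
    rw [hPm j k]
    by_cases hjk : j = k
    · simp [hjk]
    · simp only [hjk, if_false]
      by_cases hsame : L j = L k
      · rw [if_pos ((hiff j k).mpr hsame), if_pos hsame]
      · rw [if_neg (fun hex => hsame ((hiff j k).mp hex)), if_neg hsame]
  set J : Fin d → Finset (Fin n) := fun i => univ.filter (fun j => X i j ≠ 0) with hJdef
  set c : Fin d → ℝ := fun i => 1 + (1 - 1/(ω i : ℝ)) * δ i with hcdef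
  -- rewrite LHS as a sum over i
  have hLHS : ∑ j, ∑ k, Pm j k * h j * h k * (∑ i, X i j * X i k)
      = ∑ i, ∑ j, ∑ k,
        (if j = k then p j else if L j = L k then 0 else p j * p k)
          * (h j * X i j) * (h k * X i k) := by
    calc ∑ j, ∑ k, Pm j k * h j * h k * (∑ i, X i j * X i k)
        = ∑ j, ∑ k, ∑ i, Pm j k * h j * h k * (X i j * X i k) := by
          simp_rw [Finset.mul_sum]
      _ = ∑ j, ∑ i, ∑ k, Pm j k * h j * h k * (X i j * X i k) :=
          Finset.sum_congr rfl fun j _ => Finset.sum_comm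
      _ = ∑ i, ∑ j, ∑ k, Pm j k * h j * h k * (X i j * X i k) := Finset.sum_comm
      _ = _ := by
          apply Finset.sum_congr rfl; intro i _
          apply Finset.sum_congr rfl; intro j _
          apply Finset.sum_congr rfl; intro k _
          rw [hPm' j k]; ring
  -- rewrite RHS as a sum over i
  have hRHS : ∑ j, p j * v j * (h j) ^ 2
      = ∑ i, c i * ∑ j ∈ J i, p j * (h j * X i j) ^ 2 := by
    calc ∑ j, p j * v j * (h j) ^ 2
        = ∑ j, ∑ i, c i * X i j ^ 2 * (p j * h j ^ 2) := by
          apply Finset.sum_congr rfl; intro j _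
          rw [hv j]
          rw [show p j * (∑ i ∈ univ.filter (fun i => X i j ≠ 0), c i * X i j ^ 2) * h j ^ 2
              = ∑ i ∈ univ.filter (fun i => X i j ≠ 0), c i * X i j ^ 2 * (p j * h j ^ 2) by
            rw [Finset.mul_sum, Finset.sum_mul]
            apply Finset.sum_congr rfl; intro i _; ring]
          apply Finset.sum_subset (Finset.subset_univ _)
          intro i _ hi
          simp only [Finset.mem_filter, Finset.mem_univ, true_and, not_not] at hi
          rw [hi]; ring
      _ = ∑ i, ∑ j, c i * X i j ^ 2 * (p j * h j ^ 2) := Finset.sum_comm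
      _ = _ := by
          apply Finset.sum_congr rfl; intro i _
          rw [Finset.mul_sum]
          rw [show (∑ j, c i * X i j ^ 2 * (p j * h j ^ 2))
              = ∑ j ∈ J i, c i * X i j ^ 2 * (p j * h j ^ 2) by
            symm
            apply Finset.sum_subset (Finset.subset_univ _)
            intro j _ hj
            simp only [hJdef, Finset.mem_filter, Finset.mem_univ, true_and, not_not] at hj
            rw [hj]; ring]
          apply Finset.sum_congr rfl; intro j _; ring
  rw [hLHS, hRHS]
  apply Finset.sum_le_sum
  intro i _
  have hωi : ω i = (univ.filter fun l => ((J i).filter fun j => L j = l).Nonempty).card := by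
    rw [hω i]
    congr 1
    apply Finset.filter_congr
    intro l _
    have : (univ.filter fun j => X i j ≠ 0) ∩ B l = (J i).filter fun j => L j = l := by
      ext j
      simp only [Finset.mem_inter, Finset.mem_filter, Finset.mem_univ, true_and, hJdef,
        hmem j l]
    rw [this]
  exact key_eso L p hp (J i) (fun j => h j * X i j)
    (fun j hj => by
      simp only [hJdef, Finset.mem_filter, Finset.mem_univ, true_and, not_not] at hj
      show h j * X i j = 0
      rw [hj, mul_zero])
    (δ i) (hδ i) (ω i) hωi
end

section
/- Let d ≥ 1, n ≥ 1 be integers, let λ > 0, γ > 0, let u ∈ ℝ^d with u_i ≥ 0 for all i, and let X ∈ ℝ^{d×n} have no zero row. For any probability vector p ∈ ℝ^d with p_i > 0 for all i and Σ_{i=1}^d p_i = 1, define the total complexity T_P(p) := (max_{i∈[d]} (u_i + nλγ)/(p_i·nλγ)) · (Σ_{i=1}^d p_i·‖X_{i:}‖_0). Then the importance sampling p* given by p*_i := (u_i + nλγ)/(Σ_{k=1}^d (u_k + nλγ)) minimizes T_P: T_P(p*) ≤ T_P(p) for every probability vector p with positive entries, and T_P(p*) = (1/(nλγ))·Σ_{i=1}^d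 (u_i + nλγ)·‖X_{i:}‖_0. -/
/-- **Theorem 5.2 (Importance sampling minimizes total complexity).**
The importance sampling `p*_i ∝ u_i + nλγ` minimizes the total complexity
`T_P(p) = (max_i (u_i + nλγ)/(p_i nλγ)) · (Σ_i p_i ‖X_{i:}‖₀)` over probability vectors
with positive entries, with optimal value `(1/(nλγ)) Σ_i (u_i + nλγ)‖X_{i:}‖₀`. -/
theorem stmt_3 (d n : ℕ) (hd : 0 < d) (hn : 0 < n)
    (lam γ : ℝ) (hlam : 0 < lam) (hγ : 0 < γ)
    (u : Fin d → ℝ) (hu : ∀ i, 0 ≤ u i)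
    (X : Matrix (Fin d) (Fin n) ℝ) (hrow : ∀ i, ∃ j, X i j ≠ 0)
    (nnzRow : Fin d → ℝ)
    (hnnz : ∀ i, nnzRow i = ((Finset.univ.filter fun j => X i j ≠ 0).card : ℝ))
    (TP : (Fin d → ℝ) → ℝ)
    (hTP : ∀ p : Fin d → ℝ, TP p =
      (Finset.univ.sup' (Finset.univ_nonempty_iff.mpr ⟨⟨0, hd⟩⟩)
        (fun i => (u i + n * lam * γ) / (p i * (n * lam * γ)))) *
      (∑ i, p i * nnzRow i))
    (pstar : Fin d → ℝ)
    (hpstar : ∀ i, pstar i = (u i + n * lam * γ) / (∑ k, (u k + n * lam * γ))) :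
    (∀ i, 0 < pstar i) ∧ (∑ i, pstar i = 1) ∧
      (∀ p : Fin d → ℝ, (∀ i, 0 < p i) → (∑ i, p i = 1) → TP pstar ≤ TP p) ∧
      TP pstar = (1 / (n * lam * γ)) * ∑ i, (u i + n * lam * γ) * nnzRow i := by
  have hcpos : 0 < (n : ℝ) * lam * γ :=
    mul_pos (mul_pos (by exact_mod_cast hn) hlam) hγ
  set c : ℝ := (n : ℝ) * lam * γ with hc
  have hipos : ∀ i, 0 < u i + c := fun i => add_pos_of_nonneg_of_pos (hu i) hcpos
  have hS : 0 < ∑ k, (u k + c) :=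
    Finset.sum_pos (fun k _ => hipos k) (Finset.univ_nonempty_iff.mpr ⟨⟨0, hd⟩⟩)
  set S : ℝ := ∑ k, (u k + c) with hSdef
  have hppos : ∀ i, 0 < pstar i := fun i => by
    rw [hpstar i]; exact div_pos (hipos i) hS
  have hnnz0 : ∀ i, 0 ≤ nnzRow i := fun i => by rw [hnnz i]; positivity
  have hsum : (∑ i, pstar i) = 1 := by
    have : (∑ i, pstar i) = (∑ i, (u i + c)) / S := by
      rw [Finset.sum_div]; exact Finset.sum_congr rfl fun i _ => hpstar i
    rw [this, div_self hS.ne']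
  have hsup : (Finset.univ.sup' (Finset.univ_nonempty_iff.mpr ⟨⟨0, hd⟩⟩)
      (fun i => (u i + c) / (pstar i * c))) = S / c := by
    have : (fun i : Fin d => (u i + c) / (pstar i * c)) = fun _ => S / c := by
      funext i
      rw [hpstar i, div_mul_eq_mul_div, div_div_eq_mul_div,
        mul_div_mul_left _ _ (hipos i).ne']
    rw [this, Finset.sup'_const]
  have hval : TP pstar = (1 / c) * ∑ i, (u i + c) * nnzRow i := by
    rw [hTP, hsup, Finset.mul_sum, Finset.mul_sum]
    refine Finset.sum_congr rfl fun i _ => ?_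
    rw [hpstar i]
    field_simp
  refine ⟨hppos, hsum, ?_, hval⟩
  intro p hp hps
  rw [hval, hTP]
  set M := Finset.univ.sup' (Finset.univ_nonempty_iff.mpr ⟨⟨0, hd⟩⟩)
      (fun i => (u i + c) / (p i * c)) with hM
  rw [one_div_mul_eq_div, div_le_iff₀ hcpos]
  calc (∑ i, (u i + c) * nnzRow i) ≤ (∑ i, M * p i * nnzRow i) * c := by
        rw [Finset.sum_mul]
        refine Finset.sum_le_sum fun i _ => ?_
        have h1 : (u i + c) / (p i * c) ≤ M := by
          rw [hM]
          exact Finset.le_sup' (fun i => (u i + c) / (p i * c)) (Finset.mem_univ i)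
        have h2 : u i + c ≤ M * (p i * c) :=
          (div_le_iff₀ (mul_pos (hp i) hcpos)).mp h1
        calc (u i + c) * nnzRow i ≤ (M * (p i * c)) * nnzRow i :=
              mul_le_mul_of_nonneg_right h2 (hnnz0 i)
          _ = M * p i * nnzRow i * c := by ring
    _ = M * (∑ i, p i * nnzRow i) * c := by rw [Finset.mul_sum]; ring_nf
end

section
/- For all integers d ≥ 2 and n ≥ 2 and every ε > 0, there exist matrices X, Y ∈ ℝ^{d×n}, each with no zero row and no zero column, such that C_P(X)/C_D(X) < 1/d + ε and C_P(Y)/C_D(Y) > n − ε. In other words, the bounds 1/d ≤ C_P/C_D ≤ n are tight. -/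
/-- `C_P(X) = Σ_i ‖X_{i:}‖₀ · ‖X_{i:}‖²`. -/
noncomputable def CPmat {d n : ℕ} (X : Matrix (Fin d) (Fin n) ℝ) : ℝ :=
  ∑ i, ((Finset.univ.filter fun j => X i j ≠ 0).card : ℝ) * ∑ j, (X i j) ^ 2

/-- `C_D(X) = Σ_j ‖X_{:j}‖₀ · ‖X_{:j}‖²`. -/
noncomputable def CDmat {d n : ℕ} (X : Matrix (Fin d) (Fin n) ℝ) : ℝ :=
  ∑ j, ((Finset.univ.filter fun i => X i j ≠ 0).card : ℝ) * ∑ i, (X i j) ^ 2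

/-!
For small `a ≠ 0`, take the `d × n` "hook" matrix whose first row is constantly `a`, whose first
column is `1` below that row, and which vanishes elsewhere. Its costs are
`C_P = n²a² + (d - 1)` and `C_D = (d + n - 1)a² + d(d - 1)`, so `C_P / C_D → 1/d` as `a → 0`.
The transpose of the `n × d` hook matrix swaps the two costs and its ratio tends to `n`.
-/

open Finset Filter Topology Matrix

noncomputable def vecCost {ι : Type*} [Fintype ι] (v : ι → ℝ) : ℝ :=
  (#{j | v j ≠ 0} : ℝ) * ∑ j, v j ^ 2

section vecCost

variable {ι : Type*} [Fintype ι]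

lemma vecCost_of_forall_ne_zero {v : ι → ℝ} (hv : ∀ j, v j ≠ 0) :
    vecCost v = Fintype.card ι * ∑ j, v j ^ 2 := by
  simp [vecCost, hv]

lemma vecCost_const {a : ℝ} (ha : a ≠ 0) :
    vecCost (fun _ : ι ↦ a) = Fintype.card ι ^ 2 * a ^ 2 := by
  rw [vecCost_of_forall_ne_zero fun _ ↦ ha]
  simp only [sum_const, card_univ, nsmul_eq_mul]; ring

lemma vecCost_single [DecidableEq ι] (i : ι) (c : ℝ) :
    vecCost (Pi.single i c : ι → ℝ) = c ^ 2 := by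
  by_cases hc : c = 0 <;> simp [vecCost, Pi.single_apply, apply_ite (· ^ 2), hc, filter_eq']

end vecCost

lemma sum_ite_eq_add_mul {ι : Type*} [Fintype ι] [DecidableEq ι] (i₀ : ι) (A B : ℝ) :
    ∑ i, (if i = i₀ then A else B) = A + (Fintype.card ι - 1) * B := by
  rw [Fintype.sum_eq_add_sum_compl i₀, if_pos rfl,
    sum_congr rfl fun i hi ↦ if_neg (by simpa using hi)]
  have : 1 ≤ Fintype.card ι := Fintype.card_pos_iff.2 ⟨i₀⟩
  simp [card_compl, Nat.cast_sub this]

lemma CPmat_eq_sum_vecCost {d n : ℕ} (X : Matrix (Fin d) (Fin n) ℝ) :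
    CPmat X = ∑ i, vecCost (X i) := rfl

lemma CDmat_eq_sum_vecCost {d n : ℕ} (X : Matrix (Fin d) (Fin n) ℝ) :
    CDmat X = ∑ j, vecCost (Xᵀ j) := rfl

lemma CPmat_transpose {d n : ℕ} (X : Matrix (Fin d) (Fin n) ℝ) : CPmat Xᵀ = CDmat X := rfl

lemma CDmat_transpose {d n : ℕ} (X : Matrix (Fin d) (Fin n) ℝ) : CDmat Xᵀ = CPmat X := rfl

section hookMatrix

variable {d n : ℕ} [NeZero d] [NeZero n] {a : ℝ}

def hookMatrix (d n : ℕ) [NeZero d] [NeZero n] (a : ℝ) : Matrix (Fin d) (Fin n) ℝ :=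
  fun i ↦ if i = 0 then fun _ ↦ a else Pi.single 0 1

lemma hookMatrix_row_exists_ne_zero (ha : a ≠ 0) (i : Fin d) :
    ∃ j, hookMatrix d n a i j ≠ 0 :=
  ⟨0, by by_cases hi : i = 0 <;> simp [hookMatrix, hi, ha]⟩

lemma hookMatrix_col_exists_ne_zero (ha : a ≠ 0) (j : Fin n) :
    ∃ i, hookMatrix d n a i j ≠ 0 :=
  ⟨0, by simp [hookMatrix, ha]⟩

lemma hookMatrix_transpose_zero :
    (hookMatrix d n a)ᵀ 0 = Function.update (fun _ ↦ 1) 0 a := by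
  ext i; by_cases hi : i = 0 <;> simp [hookMatrix, hi]

lemma hookMatrix_transpose_of_ne_zero {j : Fin n} (hj : j ≠ 0) :
    (hookMatrix d n a)ᵀ j = Pi.single 0 a := by
  ext i; by_cases hi : i = 0 <;> simp [hookMatrix, hi, hj]

lemma CPmat_hookMatrix (ha : a ≠ 0) : CPmat (hookMatrix d n a) = n ^ 2 * a ^ 2 + (d - 1) := by
  have hrow (i : Fin d) : vecCost (hookMatrix d n a i) = if i = 0 then n ^ 2 * a ^ 2 else 1 := by
    by_cases hi : i = 0 <;> simp [hookMatrix, hi, vecCost_const ha, vecCost_single]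
  simp [CPmat_eq_sum_vecCost, hrow, sum_ite_eq_add_mul]

lemma CDmat_hookMatrix (ha : a ≠ 0) :
    CDmat (hookMatrix d n a) = (d + n - 1) * a ^ 2 + d * (d - 1) := by
  have hcol (j : Fin n) : vecCost ((hookMatrix d n a)ᵀ j) =
      if j = 0 then d * (a ^ 2 + (d - 1)) else a ^ 2 := by
    by_cases hj : j = 0
    · rw [if_pos hj, hj, hookMatrix_transpose_zero, vecCost_of_forall_ne_zero]
      · simp [Function.update_apply, apply_ite (· ^ 2), sum_ite_eq_add_mul]
      · intro i; by_cases hi : i = 0 <;> simp [hi, ha]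
    · rw [if_neg hj, hookMatrix_transpose_of_ne_zero hj, vecCost_single]
  simp only [CDmat_eq_sum_vecCost, hcol, sum_ite_eq_add_mul, Fintype.card_fin]
  ring

end hookMatrix

lemma exists_ne_zero_of_eventually_nhds_zero {p : ℝ → Prop} (h : ∀ᶠ a in 𝓝 0, p a) :
    ∃ a ≠ 0, p a := by
  obtain ⟨a, hpa, ha⟩ :=
    ((h.filter_mono nhdsWithin_le_nhds).and self_mem_nhdsWithin).exists (f := 𝓝[≠] 0)
  exact ⟨a, ha, hpa⟩

section ratio

variable {d n : ℕ} [NeZero d] [NeZero n]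

lemma exists_hookMatrix_CPmat_div_CDmat_lt (hd : 2 ≤ d) {c : ℝ} (hc : 1 / d < c) :
    ∃ a ≠ 0, CPmat (hookMatrix d n a) / CDmat (hookMatrix d n a) < c := by
  have hd' : (2 : ℝ) ≤ d := by exact_mod_cast hd
  set g : ℝ → ℝ := fun a ↦ (n ^ 2 * a ^ 2 + (d - 1)) / ((d + n - 1) * a ^ 2 + d * (d - 1))
  have hg : ContinuousAt g 0 :=
    ContinuousAt.div (by fun_prop) (by fun_prop) (ne_of_gt (by nlinarith))
  have hg0 : g 0 = 1 / d := by
    have : (d : ℝ) - 1 ≠ 0 := by linarith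
    norm_num [g]; field_simp
  obtain ⟨a, ha, hlt⟩ := exists_ne_zero_of_eventually_nhds_zero
    (hg.eventually_lt continuousAt_const (hg0 ▸ hc))
  exact ⟨a, ha, by rwa [CPmat_hookMatrix ha, CDmat_hookMatrix ha]⟩

lemma exists_hookMatrix_CDmat_div_CPmat_gt (hd : 2 ≤ d) {c : ℝ} (hc : c < d) :
    ∃ a ≠ 0, c < CDmat (hookMatrix d n a) / CPmat (hookMatrix d n a) := by
  have hd' : (2 : ℝ) ≤ d := by exact_mod_cast hd
  set g : ℝ → ℝ := fun a ↦ ((d + n - 1) * a ^ 2 + d * (d - 1)) / (n ^ 2 * a ^ 2 + (d - 1))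
  have hg : ContinuousAt g 0 :=
    ContinuousAt.div (by fun_prop) (by fun_prop) (ne_of_gt (by nlinarith))
  have hg0 : g 0 = d := by
    have : (d : ℝ) - 1 ≠ 0 := by linarith
    norm_num [g]; field_simp
  obtain ⟨a, ha, hlt⟩ := exists_ne_zero_of_eventually_nhds_zero
    (continuousAt_const.eventually_lt hg (hg0 ▸ hc))
  exact ⟨a, ha, by rwa [CPmat_hookMatrix ha, CDmat_hookMatrix ha]⟩

end ratio

/-- **Tightness of the bounds `1/d ≤ C_P/C_D ≤ n` (Theorem 5.3).**
For all `d, n ≥ 2` and `ε > 0` there are matrices `X, Y ∈ ℝ^{d×n}` with no zero rows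
or columns such that `C_P(X)/C_D(X) < 1/d + ε` and `C_P(Y)/C_D(Y) > n − ε`. -/
theorem stmt_5 (d n : ℕ) (hd : 2 ≤ d) (hn : 2 ≤ n) (ε : ℝ) (hε : 0 < ε) :
    ∃ X Y : Matrix (Fin d) (Fin n) ℝ,
      (∀ i, ∃ j, X i j ≠ 0) ∧ (∀ j, ∃ i, X i j ≠ 0) ∧
      (∀ i, ∃ j, Y i j ≠ 0) ∧ (∀ j, ∃ i, Y i j ≠ 0) ∧
      CPmat X / CDmat X < 1 / (d : ℝ) + ε ∧ CPmat Y / CDmat Y > (n : ℝ) - ε := by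
  have : NeZero d := ⟨by omega⟩
  have : NeZero n := ⟨by omega⟩
  obtain ⟨a, ha, hX⟩ :=
    exists_hookMatrix_CPmat_div_CDmat_lt (n := n) hd (c := 1 / d + ε) (by linarith)
  obtain ⟨b, hb, hY⟩ :=
    exists_hookMatrix_CDmat_div_CPmat_gt (n := d) hn (c := n - ε) (by linarith)
  refine ⟨hookMatrix d n a, (hookMatrix n d b)ᵀ, hookMatrix_row_exists_ne_zero ha,
    hookMatrix_col_exists_ne_zero ha, hookMatrix_col_exists_ne_zero hb,
    hookMatrix_row_exists_ne_zero hb, hX, ?_⟩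
  rwa [CPmat_transpose, CDmat_transpose]
end

section
/- Let d, n ≥ 1 be integers and let α be an integer with max{d,n} ≤ α ≤ dn. Then the minimum of C_D(X) = Σ_{j=1}^n ‖X_{:j}‖_0² over all matrices X ∈ 𝔹_{≠0}^{d×n} with exactly α nonzero entries is attained and equals L(α,n) := (1/n)·(ᾱ_n² + (α − ᾱ_n)·(2ᾱ_n + n)), where ᾱ_n := n·⌊α/n⌋. -/
/-- `X ∈ 𝔹_{≠0}^{d×n}`: entries in `{-1,0,1}`, no zero row, no zero column. -/
def SignBinaryNZ {d n : ℕ} (X : Matrix (Fin d) (Fin n) ℝ) : Prop :=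
  (∀ i j, X i j = -1 ∨ X i j = 0 ∨ X i j = 1) ∧
  (∀ i, ∃ j, X i j ≠ 0) ∧ (∀ j, ∃ i, X i j ≠ 0)

/-- `‖X‖₀`: number of nonzero entries of `X`. -/
noncomputable def nnzMat {d n : ℕ} (X : Matrix (Fin d) (Fin n) ℝ) : ℕ :=
  ∑ i, (Finset.univ.filter fun j => X i j ≠ 0).card

/-- `C_D(X) = Σ_j ‖X_{:j}‖₀²` (for binary matrices). -/
noncomputable def CDbin {d n : ℕ} (X : Matrix (Fin d) (Fin n) ℝ) : ℝ :=
  ∑ j, ((Finset.univ.filter fun i => X i j ≠ 0).card : ℝ) ^ 2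

def sfun (q r j : ℕ) : ℕ := j * q + min j r

lemma sfun_succ (q r j : ℕ) :
    sfun q r (j+1) = sfun q r j + (q + if j < r then 1 else 0) := by
  unfold sfun
  rw [Nat.add_mul]
  split <;> omega

lemma sfun_exists_col (q r n : ℕ) (hrn : r ≤ n) (p : ℕ) (hp : p < n * q + r) :
    ∃ j < n, sfun q r j ≤ p ∧ p < sfun q r (j+1) := by
  classical
  have h0 : sfun q r 0 ≤ p := by simp [sfun]
  have hj := Nat.findGreatest_spec (P := fun m => sfun q r m ≤ p) (Nat.zero_le n) h0
  set j := Nat.findGreatest (fun m => sfun q r m ≤ p) n with hjdef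
  have hjn : j ≤ n := Nat.findGreatest_le n
  have hsn : sfun q r n = n * q + r := by unfold sfun; omega
  have hjlt : j < n := by
    rcases eq_or_lt_of_le hjn with h|h
    · exfalso; rw [h, hsn] at hj; omega
    · exact h
  refine ⟨j, hjlt, hj, ?_⟩
  by_contra hc
  push_neg at hc
  exact Nat.findGreatest_is_greatest (Nat.lt_succ_self j) hjlt hc

open Classical in
noncomputable def buildX (d n q r : ℕ) : Matrix (Fin d) (Fin n) ℝ :=
  fun i j => if ∃ p, sfun q r j.1 ≤ p ∧ p < sfun q r (j.1+1) ∧ p % d = i.1 then 1 else 0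

lemma buildX_ne_iff (d n q r : ℕ) (i : Fin d) (j : Fin n) :
    buildX d n q r i j ≠ 0 ↔
      ∃ p, sfun q r j.1 ≤ p ∧ p < sfun q r (j.1+1) ∧ p % d = i.1 := by
  unfold buildX
  split <;> simp_all

lemma nnz_eq_sum_cols {d n : ℕ} (X : Matrix (Fin d) (Fin n) ℝ) :
    nnzMat X = ∑ j, (Finset.univ.filter fun i => X i j ≠ 0).card := by
  unfold nnzMat
  simp only [Finset.card_filter]
  exact Finset.sum_comm

lemma filter_lt_range (n r : ℕ) (h : r ≤ n) :
    (Finset.range n).filter (· < r) = Finset.range r := by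
  ext x; simp only [Finset.mem_filter, Finset.mem_range]; omega

/-- **Lemma 5.10 (i): minimum of `C_D` over `𝔹_{≠0}^{d×n}` with `α` nonzeros.**
The minimum is attained and equals `L(α,n) = (ᾱ_n² + (α − ᾱ_n)(2ᾱ_n + n))/n`,
where `ᾱ_n = n⌊α/n⌋`. -/
theorem stmt_6 (d n α : ℕ) (hd : 1 ≤ d) (hn : 1 ≤ n)
    (hα₁ : max d n ≤ α) (hα₂ : α ≤ d * n)
    (L : ℝ)
    (hL : L = (((n * (α / n) : ℕ) : ℝ) ^ 2 +
      ((α : ℝ) - ((n * (α / n) : ℕ) : ℝ)) * (2 * ((n * (α / n) : ℕ) : ℝ) + (n : ℝ))) / (n : ℝ)) :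
    (∃ X : Matrix (Fin d) (Fin n) ℝ, SignBinaryNZ X ∧ nnzMat X = α ∧ CDbin X = L) ∧
    (∀ X : Matrix (Fin d) (Fin n) ℝ, SignBinaryNZ X → nnzMat X = α → L ≤ CDbin X) := by
  classical
  have hd0 : 0 < d := hd
  have hn0 : 0 < n := hn
  set q := α / n with hqdef
  set r := α % n with hrdef
  have heq : α = n * q + r := (Nat.div_add_mod α n).symm
  have hrn : r < n := Nat.mod_lt _ hn0
  have hq1 : 1 ≤ q := (Nat.one_le_div_iff hn0).mpr (le_trans (le_max_right d n) hα₁)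
  have hqd : q ≤ d := by
    have h := Nat.div_le_div_right (c := n) hα₂
    rwa [Nat.mul_div_cancel _ hn0] at h
  have hqd' : 0 < r → q + 1 ≤ d := by
    intro hr
    rcases lt_or_eq_of_le hqd with h | h
    · omega
    · exfalso
      have hh : n * q = n * d := by rw [h]
      have : d * n < α := by rw [heq, Nat.mul_comm d n]; omega
      omega
  have hda : d ≤ α := le_trans (le_max_left d n) hα₁
  have hnR : (n:ℝ) ≠ 0 := Nat.cast_ne_zero.mpr (by omega)
  have hαR : (α:ℝ) = n * q + r := by exact_mod_cast congrArg (Nat.cast : ℕ → ℝ) heq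
  have hLval : L = n * (q:ℝ)^2 + (2*q+1) * r := by
    rw [hL]
    push_cast
    rw [hαR]
    field_simp
    ring
  set c : ℕ → ℕ := fun m => q + if m < r then 1 else 0 with hcdef
  have hc1 : ∀ m, 1 ≤ c m := by intro m; simp only [hcdef]; omega
  have hcd : ∀ m, c m ≤ d := by
    intro m; simp only [hcdef]; split
    · exact hqd' (by omega)
    · omega
  have hssucc : ∀ m, sfun q r (m+1) = sfun q r m + c m := fun m => sfun_succ q r m
  set X := buildX d n q r with hXdef
  have hcolfil : ∀ j : Fin n,
      (Finset.univ.filter fun i => X i j ≠ 0)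
        = (Finset.Ico (sfun q r j.1) (sfun q r (j.1+1))).image
            (fun p => (⟨p % d, Nat.mod_lt p hd0⟩ : Fin d)) := by
    intro j
    ext i
    simp only [Finset.mem_filter, Finset.mem_univ, true_and, Finset.mem_image,
      Finset.mem_Ico, hXdef, buildX_ne_iff, Fin.ext_iff]
    constructor
    · rintro ⟨p, h1, h2, h3⟩; exact ⟨p, ⟨h1, h2⟩, h3⟩
    · rintro ⟨p, ⟨h1, h2⟩, h3⟩; exact ⟨p, h1, h2, h3⟩
  have hcolcard : ∀ j : Fin n,
      (Finset.univ.filter fun i => X i j ≠ 0).card = c j.1 := by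
    intro j
    rw [hcolfil j, Finset.card_image_of_injOn, Nat.card_Ico, hssucc]
    · omega
    · intro p₁ hp₁ p₂ hp₂ hEq
      simp only [Finset.coe_Ico, Set.mem_Ico] at hp₁ hp₂
      have hmod : p₁ % d = p₂ % d := by simpa [Fin.ext_iff] using hEq
      have hlen : sfun q r (j.1+1) = sfun q r j.1 + c j.1 := hssucc j.1
      have hcdj := hcd j.1
      rcases le_total p₁ p₂ with h | h
      · have hdvd : d ∣ p₂ - p₁ := (Nat.modEq_iff_dvd' h).mp hmod
        have h0 := Nat.eq_zero_of_dvd_of_lt hdvd (by omega)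
        omega
      · have hdvd : d ∣ p₁ - p₂ := (Nat.modEq_iff_dvd' h).mp hmod.symm
        have h0 := Nat.eq_zero_of_dvd_of_lt hdvd (by omega)
        omega
  have hrow : ∀ i : Fin d, ∃ j : Fin n, X i j ≠ 0 := by
    intro i
    obtain ⟨j, hjn, h1, h2⟩ := sfun_exists_col q r n (le_of_lt hrn) i.1
      (by have := i.2; omega)
    refine ⟨⟨j, hjn⟩, ?_⟩
    rw [hXdef, buildX_ne_iff]
    exact ⟨i.1, h1, h2, Nat.mod_eq_of_lt i.2⟩
  have hcol : ∀ j : Fin n, ∃ i : Fin d, X i j ≠ 0 := by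
    intro j
    refine ⟨⟨sfun q r j.1 % d, Nat.mod_lt _ hd0⟩, ?_⟩
    rw [hXdef, buildX_ne_iff]
    exact ⟨sfun q r j.1, le_refl _, by rw [hssucc]; have := hc1 j.1; omega, rfl⟩
  have hsumite : ∑ m ∈ Finset.range n, (if m < r then 1 else 0) = r := by
    rw [← Finset.card_filter, filter_lt_range n r hrn.le, Finset.card_range]
  have hsumc : ∑ j : Fin n, c j.1 = α := by
    rw [Fin.sum_univ_eq_sum_range (fun m => c m)]
    simp only [hcdef]
    rw [Finset.sum_add_distrib, Finset.sum_const, Finset.card_range, hsumite]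
    simp only [smul_eq_mul]
    omega
  have hnnz : nnzMat X = α := by
    rw [nnz_eq_sum_cols]
    simp only [hcolcard]
    exact hsumc
  have hCD : CDbin X = n * (q:ℝ)^2 + (2*q+1) * r := by
    unfold CDbin
    simp only [hcolcard]
    rw [Fin.sum_univ_eq_sum_range (fun m => ((c m : ℕ):ℝ)^2)]
    have step : ∀ m, ((c m : ℕ):ℝ)^2 = (q:ℝ)^2 + if m < r then 2*(q:ℝ)+1 else 0 := by
      intro m; simp only [hcdef]; split <;> push_cast <;> ring
    simp only [step]
    rw [Finset.sum_add_distrib, Finset.sum_const, Finset.card_range,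
      ← Finset.sum_filter, filter_lt_range n r hrn.le, Finset.sum_const, Finset.card_range]
    simp only [nsmul_eq_mul]
    ring
  constructor
  · refine ⟨X, ⟨?_, hrow, hcol⟩, hnnz, by rw [hCD, hLval]⟩
    intro i j
    rw [hXdef]
    unfold buildX
    split
    · right; right; rfl
    · right; left; rfl
  · intro Y hY hnzY
    set cY : Fin n → ℕ := fun j => (Finset.univ.filter fun i => Y i j ≠ 0).card with hcY
    have hsumY : ∑ j, cY j = α := (nnz_eq_sum_cols Y).symm.trans hnzY
    have hCDY : CDbin Y = ∑ j, (cY j : ℝ)^2 := by unfold CDbin; rfl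
    rw [hLval, hCDY]
    have key : ∀ j : Fin n, (q:ℝ)^2 + (2*q+1) * ((cY j : ℝ) - q) ≤ (cY j : ℝ)^2 := by
      intro j
      rcases le_or_gt (cY j) q with h | h
      · have h' : (cY j : ℝ) ≤ q := by exact_mod_cast h
        nlinarith [sq_nonneg ((cY j : ℝ) - q)]
      · have h' : (q:ℝ) + 1 ≤ cY j := by exact_mod_cast h
        nlinarith
    have hsumYR : ∑ j, (cY j : ℝ) = (α:ℝ) := by
      rw [← Nat.cast_sum, hsumY]
    calc (n:ℝ) * q^2 + (2*q+1)*r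
        = ∑ j : Fin n, ((q:ℝ)^2 + (2*q+1) * ((cY j:ℝ) - q)) := by
          rw [Finset.sum_add_distrib, Finset.sum_const, Finset.card_univ, Fintype.card_fin,
            ← Finset.mul_sum, Finset.sum_sub_distrib, Finset.sum_const, Finset.card_univ,
            Fintype.card_fin, hsumYR, hαR]
          ring
      _ ≤ ∑ j, (cY j:ℝ)^2 := Finset.sum_le_sum (fun j _ => key j)
end

section
/- Let d, n be positive integers with d ≤ n ≤ d²/4 − (3/2)·d − 1. Then there exists a matrix X ∈ 𝔹_{≠0}^{d×n} such that C_P(X) < C_D(X). Symmetrically, if n ≤ d ≤ n²/4 − (3/2)·n − 1, then there exists a matrix X ∈ 𝔹_{≠0}^{d×n} such that C_D(X) < C_P(X). -/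
/-- `C_P(X) = Σ_i ‖X_{i:}‖₀²` (for binary matrices). -/
noncomputable def CPbin {d n : ℕ} (X : Matrix (Fin d) (Fin n) ℝ) : ℝ :=
  ∑ i, ((Finset.univ.filter fun j => X i j ≠ 0).card : ℝ) ^ 2

open Finset
open scoped Matrix

section Transpose

variable {d n : ℕ} {X : Matrix (Fin d) (Fin n) ℝ}

theorem CPbin_transpose : CPbin Xᵀ = CDbin X := rfl

theorem CDbin_transpose : CDbin Xᵀ = CPbin X := rfl

theorem SignBinaryNZ.transpose (hX : SignBinaryNZ X) :
    SignBinaryNZ Xᵀ :=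
  ⟨fun i j => hX.1 j i, hX.2.2, hX.2.1⟩

end Transpose

theorem sum_card_row_support_eq_sum_card_col_support {d n : ℕ}
    (X : Matrix (Fin d) (Fin n) ℝ) :
    ∑ i, #{j | X i j ≠ 0} = ∑ j, #{i | X i j ≠ 0} := by
  simp only [card_filter]
  exact sum_comm

theorem CPbin_le_of_card_row_support_le {d n R : ℕ} (X : Matrix (Fin d) (Fin n) ℝ)
    (hR : ∀ i, #{j | X i j ≠ 0} ≤ R) :
    CPbin X ≤ R * ∑ j, (#{i | X i j ≠ 0} : ℝ) := by
  rw [← Nat.cast_sum, ← sum_card_row_support_eq_sum_card_col_support, Nat.cast_sum, mul_sum]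
  refine sum_le_sum fun i _ => ?_
  rw [sq]
  gcongr
  exact_mod_cast hR i

theorem Fin.card_filter_le_val {n : ℕ} (m : ℕ) : #{j : Fin n | m ≤ (j : ℕ)} = n - m := by
  have := card_filter_add_card_filter_not (s := (univ : Finset (Fin n))) (fun j => (j : ℕ) < m)
  simp only [Fin.card_filter_val_lt, not_lt, card_univ, Fintype.card_fin] at this
  omega

theorem Fin.card_filter_lt_and_mod_eq_le {n : ℕ} (m d r : ℕ) :
    #{j : Fin n | (j : ℕ) < m ∧ (j : ℕ) % d = r} ≤ m / d + 1 := by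
  rw [← card_range (m / d + 1)]
  refine card_le_card_of_injOn (fun j => (j : ℕ) / d) (fun j hj => ?_)
    fun j₁ hj₁ j₂ hj₂ h => ?_
  · simp only [coe_filter, mem_univ, true_and, Set.mem_ofPred_eq] at hj
    simpa [Nat.lt_succ_iff] using Nat.div_le_div_right hj.1.le
  · simp only [coe_filter, mem_univ, true_and, Set.mem_ofPred_eq] at hj₁ hj₂
    apply Fin.ext
    rw [← Nat.div_add_mod (j₁ : ℕ) d, ← Nat.div_add_mod (j₂ : ℕ) d, hj₁.2, hj₂.2]
    exact congrArg (d * · + r) h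

def cyclicThenFull (d m c : ℕ) : Matrix (Fin d) (Fin (m + c)) ℝ :=
  Matrix.of fun i j => if m ≤ (j : ℕ) ∨ (j : ℕ) % d = i then 1 else 0

section CyclicThenFull

variable {d m c : ℕ}

theorem cyclicThenFull_ne_zero_iff (i : Fin d) (j : Fin (m + c)) :
    cyclicThenFull d m c i j ≠ 0 ↔ m ≤ (j : ℕ) ∨ (j : ℕ) % d = i := by
  simp [cyclicThenFull, or_iff_not_imp_left]

theorem signBinaryNZ_cyclicThenFull (hd : 0 < d) (hc : 0 < c) :
    SignBinaryNZ (cyclicThenFull d m c) := by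
  refine ⟨fun i j => ?_, fun i => ⟨⟨m, by omega⟩, ?_⟩,
    fun j => ⟨⟨j % d, Nat.mod_lt _ hd⟩, ?_⟩⟩
  · simp only [cyclicThenFull, Matrix.of_apply]
    split_ifs <;> simp
  · exact (cyclicThenFull_ne_zero_iff _ _).2 (.inl le_rfl)
  · exact (cyclicThenFull_ne_zero_iff _ _).2 (.inr rfl)

theorem card_col_support_cyclicThenFull (hd : 0 < d) (j : Fin (m + c)) :
    #{i | cyclicThenFull d m c i j ≠ 0} = if m ≤ (j : ℕ) then d else 1 := by
  simp_rw [cyclicThenFull_ne_zero_iff]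
  split_ifs with hj
  · simp [hj]
  · simp only [hj, false_or]
    rw [card_eq_one]
    exact ⟨⟨j % d, Nat.mod_lt _ hd⟩, by ext i; simp [Fin.ext_iff, eq_comm]⟩

theorem sum_col_support_cyclicThenFull (hd : 0 < d) (f : ℕ → ℝ) :
    ∑ j, f #{i | cyclicThenFull d m c i j ≠ 0} = m * f 1 + c * f d := by
  simp_rw [card_col_support_cyclicThenFull hd, apply_ite f]
  rw [sum_ite, sum_const, sum_const, nsmul_eq_mul, nsmul_eq_mul, Fin.card_filter_le_val]
  simp [Fin.card_filter_val_lt, add_comm]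

theorem card_row_support_cyclicThenFull_le (i : Fin d) :
    #{j | cyclicThenFull d m c i j ≠ 0} ≤ m / d + 1 + c := by
  calc #{j | cyclicThenFull d m c i j ≠ 0}
      ≤ #{j : Fin (m + c) | (j : ℕ) < m ∧ (j : ℕ) % d = i} +
          #{j : Fin (m + c) | m ≤ (j : ℕ)} := by
        refine (card_le_card fun j => ?_).trans (card_union_le _ _)
        simp only [mem_filter, mem_union, mem_univ, true_and, cyclicThenFull_ne_zero_iff]
        omega
    _ ≤ m / d + 1 + c := by
        rw [Fin.card_filter_le_val, Nat.add_sub_cancel_left]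
        gcongr
        exact Fin.card_filter_lt_and_mod_eq_le m d i

theorem CDbin_cyclicThenFull (hd : 0 < d) : CDbin (cyclicThenFull d m c) = m + c * d ^ 2 := by
  rw [CDbin, sum_col_support_cyclicThenFull hd (fun k => (k : ℝ) ^ 2)]
  simp

theorem mul_CPbin_cyclicThenFull_le (hd : 0 < d) :
    d * CPbin (cyclicThenFull d m c) ≤ (m + c * d + d) * (m + c * d) := by
  have hrow := CPbin_le_of_card_row_support_le (cyclicThenFull d m c)
    card_row_support_cyclicThenFull_le
  rw [sum_col_support_cyclicThenFull hd (fun k => (k : ℝ)), Nat.cast_one, mul_one] at hrow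
  have hdiv : (d : ℝ) * (m / d : ℕ) ≤ m := by exact_mod_cast Nat.mul_div_le m d
  calc (d : ℝ) * CPbin (cyclicThenFull d m c)
      ≤ d * (((m / d : ℕ) : ℝ) + 1 + c) * (m + c * d) := by
        rw [mul_assoc]; gcongr; exact_mod_cast hrow
    _ ≤ (m + c * d + d) * (m + c * d) := by gcongr; linarith

end CyclicThenFull

theorem nnz_mul_lt_of_nnz_near_half_sq {d m c : ℝ} (h : 4 * (m + c) + 4 ≤ d ^ 2)
    (h₀ : 2 * (m + c * d) ≤ d ^ 2) (h₁ : d ^ 2 < 2 * (m + c * d) + 2 * d) :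
    (m + c * d + d) * (m + c * d) < d * (m + c * d ^ 2) := by
  have he : (d ^ 2 - 2 * (m + c * d)) ^ 2 < (2 * d) ^ 2 := by
    apply pow_lt_pow_left₀ <;> linarith
  have key : 4 * (d * (m + c * d ^ 2) - (m + c * d + d) * (m + c * d)) =
      d ^ 2 * (d ^ 2 - 4 * (m + c)) - (d ^ 2 - 2 * (m + c * d)) ^ 2 := by
    ring
  nlinarith

theorem exists_split_with_nnz_near_half_sq {d n : ℕ} (hdn : d ≤ n) (h : 4 * n + 4 ≤ d ^ 2) :
    ∃ m c, n = m + c ∧ 0 < c ∧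
      2 * (m + c * d) ≤ d ^ 2 ∧ d ^ 2 < 2 * (m + c * d) + 2 * d := by
  have hd : 3 ≤ d := by nlinarith
  obtain ⟨k, rfl⟩ : ∃ k, d = k + 1 := ⟨d - 1, by omega⟩
  have hk : 0 < 2 * k := by omega
  obtain ⟨c, hc₀, hc₁⟩ : ∃ c, 2 * k * c + 2 * n ≤ (k + 1) ^ 2 ∧
      (k + 1) ^ 2 < 2 * k * c + 2 * k + 2 * n := by
    refine ⟨((k + 1) ^ 2 - 2 * n) / (2 * k), ?_, ?_⟩
    · have := Nat.div_mul_le_self ((k + 1) ^ 2 - 2 * n) (2 * k)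
      rw [mul_comm] at this
      omega
    · have := Nat.lt_mul_div_succ ((k + 1) ^ 2 - 2 * n) hk
      rw [mul_add_one] at this
      omega
  have hc_pos : 0 < c := by
    by_contra! hc
    interval_cases c
    nlinarith
  have hcn : c ≤ n := by
    by_contra! hc
    nlinarith
  obtain ⟨m, rfl⟩ : ∃ m, n = m + c := ⟨n - c, by omega⟩
  exact ⟨m, c, rfl, hc_pos, by linarith, by linarith⟩

theorem exists_CPbin_lt_CDbin {d n : ℕ} (hdn : d ≤ n) (h : 4 * n + 4 ≤ d ^ 2) :
    ∃ X : Matrix (Fin d) (Fin n) ℝ, SignBinaryNZ X ∧ CPbin X < CDbin X := by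
  obtain ⟨m, c, rfl, hc, h₀, h₁⟩ := exists_split_with_nnz_near_half_sq hdn h
  have hd : 0 < d := by nlinarith
  refine ⟨cyclicThenFull d m c, signBinaryNZ_cyclicThenFull hd hc,
    lt_of_mul_lt_mul_left ?_ (Nat.cast_nonneg d)⟩
  rw [CDbin_cyclicThenFull hd]
  refine (mul_CPbin_cyclicThenFull_le hd).trans_lt (nnz_mul_lt_of_nnz_near_half_sq ?_ ?_ ?_)
  all_goals exact_mod_cast ‹_›

theorem stmt_9_general (d n : ℕ) :
    (d ≤ n → (n : ℝ) ≤ (d : ℝ) ^ 2 / 4 - (3 / 2) * (d : ℝ) - 1 →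
      ∃ X : Matrix (Fin d) (Fin n) ℝ, SignBinaryNZ X ∧ CPbin X < CDbin X) ∧
    (n ≤ d → (d : ℝ) ≤ (n : ℝ) ^ 2 / 4 - (3 / 2) * (n : ℝ) - 1 →
      ∃ X : Matrix (Fin d) (Fin n) ℝ, SignBinaryNZ X ∧ CDbin X < CPbin X) := by
  refine ⟨fun hdn hbound => exists_CPbin_lt_CDbin hdn ?_, fun hnd hbound => ?_⟩
  · have : (4 * n + 4 : ℝ) ≤ d ^ 2 := by linarith [(d.cast_nonneg : (0 : ℝ) ≤ d)]
    exact_mod_cast this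
  · have : (4 * d + 4 : ℝ) ≤ n ^ 2 := by linarith [(n.cast_nonneg : (0 : ℝ) ≤ n)]
    obtain ⟨X, hX, hlt⟩ := exists_CPbin_lt_CDbin hnd (by exact_mod_cast this)
    exact ⟨Xᵀ, hX.transpose, by rwa [CPbin_transpose, CDbin_transpose]⟩

/-- **Theorem 5.5.** If `d ≤ n ≤ d²/4 − (3/2)d − 1` then some `X ∈ 𝔹_{≠0}^{d×n}` has
`C_P(X) < C_D(X)`; symmetrically if `n ≤ d ≤ n²/4 − (3/2)n − 1` then some
`X ∈ 𝔹_{≠0}^{d×n}` has `C_D(X) < C_P(X)`. -/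
theorem stmt_9 (d n : ℕ) (hd : 0 < d) (hn : 0 < n) :
    (d ≤ n → (n : ℝ) ≤ (d : ℝ) ^ 2 / 4 - (3 / 2) * (d : ℝ) - 1 →
      ∃ X : Matrix (Fin d) (Fin n) ℝ, SignBinaryNZ X ∧ CPbin X < CDbin X) ∧
    (n ≤ d → (d : ℝ) ≤ (n : ℝ) ^ 2 / 4 - (3 / 2) * (n : ℝ) - 1 →
      ∃ X : Matrix (Fin d) (Fin n) ℝ, SignBinaryNZ X ∧ CDbin X < CPbin X) :=
  stmt_9_general d n
end

section
/- Let X ∈ 𝔹_{≠0}^{d×n}. If d ≥ n and ‖X‖_0 ≥ n² + 3n, then C_P(X) ≤ C_D(X). Symmetrically, if n ≥ d and ‖X‖_0 ≥ d² + 3d, then C_D(X) ≤ C_P(X). -/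
/-- Key counting lemma: if each `r i ≤ n`, the total masses agree, and the total mass is
at least `n²`, then `Σ r² ≤ Σ c²`. -/
lemma key_ineq {d n : ℕ} (r : Fin d → ℕ) (c : Fin n → ℕ) (hr : ∀ i, r i ≤ n)
    (hsum : ∑ i, r i = ∑ j, c j) (hN : n ^ 2 ≤ ∑ i, r i) :
    (∑ i, (r i : ℝ) ^ 2) ≤ ∑ j, (c j : ℝ) ^ 2 := by
  rcases Nat.eq_zero_or_pos n with hn | hn
  · have : ∀ i, r i = 0 := fun i => Nat.le_zero.mp (hn ▸ hr i)
    simp [this]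
    positivity
  · set N : ℝ := ∑ i, (r i : ℝ) with hNdef
    have hNnat : N = ((∑ i, r i : ℕ) : ℝ) := by push_cast [hNdef]; ring
    have hc : N = ∑ j, (c j : ℝ) := by rw [hNnat, hsum]; push_cast; ring
    have h1 : (∑ i, (r i : ℝ) ^ 2) ≤ n * N := by
      rw [hNdef, Finset.mul_sum]
      apply Finset.sum_le_sum
      intro i _
      have : (r i : ℝ) ≤ n := by exact_mod_cast hr i
      nlinarith [Nat.cast_nonneg (α := ℝ) (r i)]
    have h2 : N ^ 2 ≤ n * ∑ j, (c j : ℝ) ^ 2 := by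
      rw [hc]
      simpa using sq_sum_le_card_mul_sum_sq (s := Finset.univ) (f := fun j => (c j : ℝ))
    have hn2 : (n : ℝ) ^ 2 ≤ N := by
      rw [hNnat]; exact_mod_cast hN
    have hnpos : (0 : ℝ) < n := by exact_mod_cast hn
    have hNpos : (0 : ℝ) ≤ N := by rw [hNnat]; positivity
    have h3 : (n : ℝ) * (n * N) ≤ N * N := by nlinarith
    nlinarith

lemma nnz_swap {d n : ℕ} (X : Matrix (Fin d) (Fin n) ℝ) :
    ∑ i, (Finset.univ.filter fun j => X i j ≠ 0).card
      = ∑ j, (Finset.univ.filter fun i => X i j ≠ 0).card := by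
  simp_rw [Finset.card_filter]
  exact Finset.sum_comm

/-- **Theorem 5.6.** Let `X ∈ 𝔹_{≠0}^{d×n}`. If `d ≥ n` and `‖X‖₀ ≥ n² + 3n` then
`C_P(X) ≤ C_D(X)`; symmetrically, if `n ≥ d` and `‖X‖₀ ≥ d² + 3d` then
`C_D(X) ≤ C_P(X)`. -/
theorem stmt_10 (d n : ℕ) (X : Matrix (Fin d) (Fin n) ℝ) (hX : SignBinaryNZ X) :
    (n ≤ d → n ^ 2 + 3 * n ≤ nnzMat X → CPbin X ≤ CDbin X) ∧
    (d ≤ n → d ^ 2 + 3 * d ≤ nnzMat X → CDbin X ≤ CPbin X) := by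
  constructor
  · intro _ hN
    apply key_ineq (r := fun i => (Finset.univ.filter fun j => X i j ≠ 0).card)
      (c := fun j => (Finset.univ.filter fun i => X i j ≠ 0).card)
    · intro i
      simpa using Finset.card_filter_le Finset.univ (fun j => X i j ≠ 0)
    · exact nnz_swap X
    · exact le_trans (Nat.le_add_right _ _) hN
  · intro _ hN
    apply key_ineq (r := fun j => (Finset.univ.filter fun i => X i j ≠ 0).card)
      (c := fun i => (Finset.univ.filter fun j => X i j ≠ 0).card)
    · intro j
      simpa using Finset.card_filter_le Finset.univ (fun i => X i j ≠ 0)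
    · exact (nnz_swap X).symm
    · rw [← nnz_swap X]
      exact le_trans (Nat.le_add_right _ _) hN
end

section
/- Let f : ℝ^N → ℝ be differentiable and L-smooth with L > 0, let μ > 0, and let x* be a global minimizer of f such that √μ·(f(x) − f(x*)) ≤ ‖∇f(x)‖·‖x − x*‖ for all x ∈ ℝ^N (i.e., f is weakly Polyak–Łojasiewicz with parameter μ and minimizer x*). Let (x^t)_{t≥0} be the gradient descent iterates x^{t+1} := x^t − (1/L)·∇f(x^t), and let k ≥ 1. If x^t ≠ x* and f(x^t) > f(x*) for all 0 ≤ t ≤ k−1, then f(x^k) − f(x*) ≤ (f(x^0) − f(x*)) / (1 + (f(x^0) − f(x*))·(μ/(2L))·Σ_{t=0}^{k−1} 1/‖x^t − x*‖²). -/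
open scoped RealInnerProductSpace

/-- **Theorem 6.5 (gradient descent on weakly Polyak–Łojasiewicz functions).**
If `f` is `L`-smooth and weakly PL with parameter `μ > 0` and minimizer `x*`, then the
gradient descent iterates satisfy
`f(x^k) − f(x*) ≤ (f(x⁰) − f(x*)) / (1 + (f(x⁰) − f(x*))·(μ/2L)·Σ_{t<k} 1/‖x^t − x*‖²)`. -/
theorem stmt_14 (N : ℕ) (f : EuclideanSpace ℝ (Fin N) → ℝ) (L μ : ℝ)
    (hL : 0 < L) (hμ : 0 < μ)
    (hdiff : Differentiable ℝ f)
    (hsmooth : ∀ x h : EuclideanSpace ℝ (Fin N),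
      f (x + h) ≤ f x + ⟪gradient f x, h⟫ + L / 2 * ‖h‖ ^ 2)
    (xstar : EuclideanSpace ℝ (Fin N)) (hmin : ∀ y, f xstar ≤ f y)
    (hWPL : ∀ x, Real.sqrt μ * (f x - f xstar) ≤ ‖gradient f x‖ * ‖x - xstar‖)
    (x : ℕ → EuclideanSpace ℝ (Fin N))
    (hiter : ∀ t, x (t + 1) = x t - (1 / L) • gradient f (x t))
    (k : ℕ) (hk : 1 ≤ k)
    (hne : ∀ t < k, x t ≠ xstar ∧ f xstar < f (x t)) :
    f (x k) - f xstar ≤ (f (x 0) - f xstar) /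
      (1 + (f (x 0) - f xstar) * (μ / (2 * L)) *
        ∑ t ∈ Finset.range k, 1 / ‖x t - xstar‖ ^ 2) := by
  have hLne : L ≠ 0 := ne_of_gt hL
  have h2L : (0:ℝ) < 2*L := by positivity
  -- one-step descent from smoothness (multiplied through by 2L)
  have stepA : ∀ t, 2*L*f (x (t+1)) + ‖gradient f (x t)‖^2 ≤ 2*L*f (x t) := by
    intro t
    have h1 := hsmooth (x t) (-((1/L) • gradient f (x t)))
    have hx : x (t+1) = x t + -((1/L) • gradient f (x t)) := by
      rw [hiter, sub_eq_add_neg]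
    have hinner : ⟪gradient f (x t), -((1/L) • gradient f (x t))⟫
        = -(1/L) * ‖gradient f (x t)‖^2 := by
      rw [inner_neg_right, real_inner_smul_right, real_inner_self_eq_norm_sq]
      ring
    have hnorm : ‖-((1/L) • gradient f (x t))‖^2 = (1/L)^2 * ‖gradient f (x t)‖^2 := by
      rw [norm_neg, norm_smul, mul_pow, Real.norm_eq_abs, sq_abs]
    rw [hinner, hnorm, ← hx] at h1
    have h2 := mul_le_mul_of_nonneg_left h1 h2L.le
    have heq : 2*L*(f (x t) + -(1/L) * ‖gradient f (x t)‖^2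
        + L/2 * ((1/L)^2 * ‖gradient f (x t)‖^2))
        = 2*L*f (x t) - ‖gradient f (x t)‖^2 := by
      field_simp
      ring
    rw [heq] at h2
    linarith
  -- squared WPL inequality
  have stepB : ∀ t < k, μ * (f (x t) - f xstar)^2
      ≤ ‖gradient f (x t)‖^2 * ‖x t - xstar‖^2 := by
    intro t ht
    have hD : 0 ≤ f (x t) - f xstar := sub_nonneg.2 (hmin (x t))
    have h := hWPL (x t)
    have hs : 0 ≤ Real.sqrt μ * (f (x t) - f xstar) :=
      mul_nonneg (Real.sqrt_nonneg μ) hD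
    have hsq : Real.sqrt μ * Real.sqrt μ = μ := Real.mul_self_sqrt hμ.le
    nlinarith [mul_self_le_mul_self hs h]
  have hc : 0 < μ / (2*L) := by positivity
  -- key induction: inverse gap grows by at least (μ/2L)/‖x t - x*‖² each step
  have key : ∀ j ≤ k, 0 < f (x j) - f xstar →
      1/(f (x 0) - f xstar) + (μ/(2*L)) * ∑ t ∈ Finset.range j, 1/‖x t - xstar‖^2
        ≤ 1/(f (x j) - f xstar) := by
    intro j hj hpos
    induction j with
    | zero => simp
    | succ n ih =>
      have hn : n < k := hj
      have hDn : 0 < f (x n) - f xstar := sub_pos.2 (hne n hn).2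
      have ihh := ih (le_of_lt hn) hDn
      have hr : 0 < ‖x n - xstar‖ := by
        rw [norm_pos_iff, sub_ne_zero]; exact (hne n hn).1
      have hr2 : 0 < ‖x n - xstar‖^2 := by positivity
      have hA := stepA n
      have hB := stepB n hn
      have hab : f (x (n+1)) - f xstar ≤ f (x n) - f xstar := by
        nlinarith [sq_nonneg ‖gradient f (x n)‖]
      have hcomb : 2*L*(f (x (n+1)) - f xstar) * ‖x n - xstar‖^2
            + μ * (f (x n) - f xstar)^2
          ≤ 2*L*(f (x n) - f xstar) * ‖x n - xstar‖^2 := by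
        nlinarith [mul_le_mul_of_nonneg_right hA hr2.le]
      have goal2 : (f (x (n+1)) - f xstar) * (2*L*‖x n - xstar‖^2)
            + μ * (f (x n) - f xstar) * (f (x (n+1)) - f xstar)
          ≤ (f (x n) - f xstar) * (2*L*‖x n - xstar‖^2) := by
        nlinarith [mul_nonneg (mul_nonneg hμ.le hDn.le) (sub_nonneg.2 hab)]
      have hstep : 1/(f (x n) - f xstar) + (μ/(2*L))/‖x n - xstar‖^2
          ≤ 1/(f (x (n+1)) - f xstar) := by
        rw [← sub_nonneg]
        have ha0 : f (x n) - f xstar ≠ 0 := ne_of_gt hDn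
        have hb0 : f (x (n+1)) - f xstar ≠ 0 := ne_of_gt hpos
        have hr20 : ‖x n - xstar‖^2 ≠ 0 := ne_of_gt hr2
        have hid : 1/(f (x (n+1)) - f xstar)
            - (1/(f (x n) - f xstar) + (μ/(2*L))/‖x n - xstar‖^2)
            = ((f (x n) - f xstar) * (2*L*‖x n - xstar‖^2)
                - ((f (x (n+1)) - f xstar) * (2*L*‖x n - xstar‖^2)
                  + μ * (f (x n) - f xstar) * (f (x (n+1)) - f xstar)))
              / ((f (x n) - f xstar) * (f (x (n+1)) - f xstar)
                  * (2*L*‖x n - xstar‖^2)) := by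
          field_simp
        rw [hid]
        apply div_nonneg
        · linarith
        · exact le_of_lt (mul_pos (mul_pos hDn hpos) (by positivity))
      rw [Finset.sum_range_succ, mul_add, mul_one_div]
      linarith
  -- finish
  have hD0 : 0 < f (x 0) - f xstar := sub_pos.2 (hne 0 hk).2
  rw [mul_assoc]
  set S := (μ/(2*L)) * ∑ t ∈ Finset.range k, 1/‖x t - xstar‖^2 with hS
  have hSnn : 0 ≤ S := by
    apply mul_nonneg hc.le
    apply Finset.sum_nonneg
    intro t _
    positivity
  have hden : 0 < 1 + (f (x 0) - f xstar) * S := by nlinarith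
  have hDk : 0 ≤ f (x k) - f xstar := sub_nonneg.2 (hmin (x k))
  rcases eq_or_lt_of_le hDk with heq | hpos
  · rw [← heq]
    exact div_nonneg hD0.le hden.le
  · have hkey := key k le_rfl hpos
    rw [← hS] at hkey
    have e1 : (1/(f (x 0) - f xstar)) * ((f (x 0) - f xstar) * (f (x k) - f xstar))
        = f (x k) - f xstar := by
      field_simp
    have e2 : (1/(f (x k) - f xstar)) * ((f (x 0) - f xstar) * (f (x k) - f xstar))
        = f (x 0) - f xstar := by
      field_simp
    have h2 := mul_le_mul_of_nonneg_right hkey (mul_pos hD0 hpos).le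
    rw [add_mul, e1, e2] at h2
    rw [le_div_iff₀ hden]
    nlinarith [h2]
end

section
/- Let M ∈ ℝ^{N×N} be symmetric positive definite and let f : ℝ^N → ℝ be differentiable and M-smooth, i.e. f(x+h) ≤ f(x) + ⟨∇f(x),h⟩ + (1/2)·h^T·M·h for all x, h ∈ ℝ^N. Let x* be a global minimizer of f, let x ∈ ℝ^N, and let S ⊆ {1,…,N} be nonempty. Write M_S for the |S|×|S| principal submatrix of M indexed by S (which is positive definite, hence invertible) and g_S := (∇f(x))_S for the subvector of the gradient indexed by S. Define u ∈ ℝ^N by u_S := −(M_S)^{−1}·g_S and u_i := 0 for i ∉ S. Then f(x+u) − f(x*) ≤ (f(x) − f(x*)) − (1/2)·g_S^T·(M_S)^{−1}·g_S. In particular, if f(x) > f(x*), then f(x+u) − f(x*) ≤ (1 − θ(S,x)·μ(x))·(f(x) − f(x*)), where θ(S,x) := g_S^T·(M_S)^{−1}·g_S / ‖∇f(x)‖² is the proportion function and μ(x) := ‖∇f(x)‖²/(2·(f(x) − f(x*))) is the forcing function. -/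
open scoped RealInnerProductSpace
open Matrix

/-! Apply the smoothness bound with `h = u`. Since `u` vanishes off `S`, both the linear and the
quadratic term only see the block `S`: with `Q = g_Sᵀ M_S⁻¹ g_S`, the linear term is `-Q` and,
because `M_S u_S = -g_S`, the quadratic term is `Q`. This gives `f(x+u) ≤ f(x) - Q/2`; the second
claim is the same inequality rewritten, `θ(S,x) μ(x) (f(x) - f(x*))` being `Q/2` (also when
`∇f(x) = 0`, where both `Q` and the junk value `Q / 0` vanish). -/

theorem Fintype.sum_eq_sum_subtype_of_forall_notMem {ι M : Type*} [Fintype ι] [AddCommMonoid M]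
    (S : Finset ι) {f : ι → M} (hf : ∀ i ∉ S, f i = 0) : ∑ i, f i = ∑ i : S, f i := by
  rw [Finset.sum_coe_sort, Fintype.sum_subset fun i hi => not_imp_comm.1 (hf i) hi]

section SupportedOn

variable {ι : Type*} [Fintype ι] (S : Finset ι)

theorem sum_sum_mul_mul_eq_dotProduct_submatrix_of_forall_notMem {R : Type*} [CommSemiring R]
    (M : Matrix ι ι R) {y : ι → R} (hy : ∀ i ∉ S, y i = 0) :
    ∑ i, ∑ j, y i * M i j * y j =
      (fun i : S => y i) ⬝ᵥ (M.submatrix (↑) (↑) *ᵥ fun i : S => y i) := by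
  rw [Fintype.sum_eq_sum_subtype_of_forall_notMem S fun i hi => by simp [hy i hi]]
  refine Finset.sum_congr rfl fun i _ => ?_
  rw [Fintype.sum_eq_sum_subtype_of_forall_notMem S fun j hj => by simp [hy j hj], mulVec,
    dotProduct, Finset.mul_sum]
  simp only [submatrix_apply, mul_assoc]

theorem EuclideanSpace.inner_eq_dotProduct_of_forall_notMem (g y : EuclideanSpace ℝ ι)
    (hy : ∀ i ∉ S, y i = 0) : ⟪g, y⟫ = (fun i : S => g i) ⬝ᵥ fun i : S => y i := by
  rw [EuclideanSpace.inner_eq_star_dotProduct, dotProduct_comm, dotProduct,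
    Fintype.sum_eq_sum_subtype_of_forall_notMem S fun i hi => by simp [hy i hi]]
  rfl

end SupportedOn

theorem Matrix.neg_inv_mulVec_dotProduct_mulVec {n R : Type*} [Fintype n] [DecidableEq n]
    [CommRing R] {A : Matrix n n R} (hA : IsUnit A) (g : n → R) :
    -(A⁻¹ *ᵥ g) ⬝ᵥ (A *ᵥ -(A⁻¹ *ᵥ g)) = g ⬝ᵥ (A⁻¹ *ᵥ g) := by
  rw [mulVec_neg, neg_dotProduct_neg, mulVec_mulVec,
    mul_nonsing_inv _ ((isUnit_iff_isUnit_det A).1 hA), one_mulVec, dotProduct_comm]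

theorem one_sub_div_mul_div_mul_eq {Q G D : ℝ} (hQ : G = 0 → Q = 0) (hD : D ≠ 0) :
    (1 - Q / G * (G / (2 * D))) * D = D - 1 / 2 * Q := by
  rcases eq_or_ne G 0 with hG | hG
  · simp [hG, hQ hG]
  · field_simp

theorem stmt_15_general (N : ℕ) (M : Matrix (Fin N) (Fin N) ℝ)
    (hpd : M.PosDef)
    (f : EuclideanSpace ℝ (Fin N) → ℝ)
    (hsmooth : ∀ x h : EuclideanSpace ℝ (Fin N),
      f (x + h) ≤ f x + ⟪gradient f x, h⟫ + (1 / 2) * ∑ i, ∑ j, h i * M i j * h j)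
    (xstar : EuclideanSpace ℝ (Fin N)) (hmin : ∀ y, f xstar ≤ f y)
    (x : EuclideanSpace ℝ (Fin N)) (S : Finset (Fin N))
    (MS : Matrix S S ℝ) (hMS : ∀ i j : S, MS i j = M i.val j.val)
    (gS : S → ℝ) (hgS : ∀ i : S, gS i = gradient f x i.val)
    (u : EuclideanSpace ℝ (Fin N))
    (hu : ∀ i : Fin N, u i = if h : i ∈ S then -((MS⁻¹ *ᵥ gS) ⟨i, h⟩) else 0) :
    f (x + u) - f xstar ≤ (f x - f xstar) - (1 / 2) * (gS ⬝ᵥ (MS⁻¹ *ᵥ gS)) ∧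
    (f xstar < f x →
      f (x + u) - f xstar ≤
        (1 - ((gS ⬝ᵥ (MS⁻¹ *ᵥ gS)) / ‖gradient f x‖ ^ 2) *
          (‖gradient f x‖ ^ 2 / (2 * (f x - f xstar)))) * (f x - f xstar)) := by
  have hMS_eq : MS = M.submatrix (↑) (↑) := Matrix.ext hMS
  have hgS_eq : gS = fun i : S => gradient f x i := funext hgS
  have hu_off : ∀ i ∉ S, u i = 0 := fun i hi => by simp [hu, hi]
  have hu_on : (fun i : S => u i) = -(MS⁻¹ *ᵥ gS) := funext fun i => by simp [hu]
  have hinner : ⟪gradient f x, u⟫ = -(gS ⬝ᵥ (MS⁻¹ *ᵥ gS)) := by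
    rw [EuclideanSpace.inner_eq_dotProduct_of_forall_notMem S _ _ hu_off, ← hgS_eq, hu_on,
      dotProduct_neg]
  have hquad : ∑ i, ∑ j, u i * M i j * u j = gS ⬝ᵥ (MS⁻¹ *ᵥ gS) := by
    rw [sum_sum_mul_mul_eq_dotProduct_submatrix_of_forall_notMem S M hu_off, ← hMS_eq, hu_on,
      neg_inv_mulVec_dotProduct_mulVec (hMS_eq ▸ hpd.submatrix Subtype.val_injective).isUnit]
  have hdescent := hsmooth x u
  have hopt := hmin (x + u)
  refine ⟨by linarith, fun hlt => ?_⟩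
  have hgrad : ‖gradient f x‖ ^ 2 = 0 → gS ⬝ᵥ (MS⁻¹ *ᵥ gS) = 0 := fun h => by
    simp [hgS_eq, norm_eq_zero.1 (pow_eq_zero_iff two_ne_zero |>.1 h)]
  rw [one_sub_div_mul_div_mul_eq hgrad (by linarith)]
  linarith

/-- **Lemma 6.13 specialized to the smooth case (generic block descent lemma).**
If `f` is `M`-smooth (with `M` symmetric positive definite) and `u` performs the exact
block update on the block `S` (i.e. `u_S = −(M_S)⁻¹(∇f(x))_S`, `u_i = 0` off `S`), then
`f(x+u) − f(x*) ≤ (f(x) − f(x*)) − (1/2)·g_Sᵀ(M_S)⁻¹g_S`, and hence when `f(x) > f(x*)`: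
`f(x+u) − f(x*) ≤ (1 − θ(S,x)·μ(x))·(f(x) − f(x*))`. -/
theorem stmt_15 (N : ℕ) (M : Matrix (Fin N) (Fin N) ℝ)
    (hsym : M.IsSymm) (hpd : M.PosDef)
    (f : EuclideanSpace ℝ (Fin N) → ℝ) (hdiff : Differentiable ℝ f)
    (hsmooth : ∀ x h : EuclideanSpace ℝ (Fin N),
      f (x + h) ≤ f x + ⟪gradient f x, h⟫ + (1 / 2) * ∑ i, ∑ j, h i * M i j * h j)
    (xstar : EuclideanSpace ℝ (Fin N)) (hmin : ∀ y, f xstar ≤ f y)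
    (x : EuclideanSpace ℝ (Fin N)) (S : Finset (Fin N)) (hS : S.Nonempty)
    (MS : Matrix S S ℝ) (hMS : ∀ i j : S, MS i j = M i.val j.val)
    (gS : S → ℝ) (hgS : ∀ i : S, gS i = gradient f x i.val)
    (u : EuclideanSpace ℝ (Fin N))
    (hu : ∀ i : Fin N, u i = if h : i ∈ S then -((MS⁻¹ *ᵥ gS) ⟨i, h⟩) else 0) :
    f (x + u) - f xstar ≤ (f x - f xstar) - (1 / 2) * (gS ⬝ᵥ (MS⁻¹ *ᵥ gS)) ∧
    (f xstar < f x →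
      f (x + u) - f xstar ≤
        (1 - ((gS ⬝ᵥ (MS⁻¹ *ᵥ gS)) / ‖gradient f x‖ ^ 2) *
          (‖gradient f x‖ ^ 2 / (2 * (f x - f xstar)))) * (f x - f xstar)) :=
  stmt_15_general N M hpd f hsmooth xstar hmin x S MS hMS gS hgS u hu
end

section
/- Let λ_f ≥ 0, λ_F ≥ 0 and L ∈ ℝ with λ_F − λ_f + L > 0. Let f : ℝ^N → ℝ be differentiable and satisfy f(x+h) ≥ f(x) + ⟨∇f(x),h⟩ + (λ_f/2)·‖h‖² for all x, h ∈ ℝ^N, let g : ℝ^N → ℝ be any function, and suppose F := f + g is λ_F-strongly convex. Let x* be a global minimizer of F, let x ∈ ℝ^N with x ≠ x*, and set ξ := F(x) − F(x*). Then there exists y ∈ ℝ^N such that ⟨∇f(x),y⟩ + (L/2)·‖y‖² + g(x+y) − g(x) ≤ −min{ ξ/2, (ξ + (λ_F/2)·‖x − x*‖²)² / (2·(λ_F − λ_f + L)·‖x − x*‖²) }; in particular, the infimum over y ∈ ℝ^N of ⟨∇f(x),y⟩ + (L/2)·‖y‖² + g(x+y) − g(x) is at most the negative of this minimum. -/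
open scoped RealInnerProductSpace

/-- **Lemma 6.24.** If `f` is `λ_f`-strongly convex (first-order form) and `F = f + g`
is `λ_F`-strongly convex with minimizer `x*`, then for `x ≠ x*` and `ξ = F(x) − F(x*)`
there is `y` with
`⟨∇f(x),y⟩ + (L/2)‖y‖² + g(x+y) − g(x) ≤ −min{ξ/2, (ξ + (λ_F/2)‖x−x*‖²)²/(2(λ_F−λ_f+L)‖x−x*‖²)}`. -/
theorem stmt_16 (N : ℕ) (lamf lamF L : ℝ) (hlamf : 0 ≤ lamf) (hlamF : 0 ≤ lamF)
    (hpos : 0 < lamF - lamf + L)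
    (f g : EuclideanSpace ℝ (Fin N) → ℝ) (hdiff : Differentiable ℝ f)
    (hf : ∀ x h : EuclideanSpace ℝ (Fin N),
      f x + ⟪gradient f x, h⟫ + lamf / 2 * ‖h‖ ^ 2 ≤ f (x + h))
    (F : EuclideanSpace ℝ (Fin N) → ℝ) (hF : ∀ x, F x = f x + g x)
    (hsc : ∀ x y : EuclideanSpace ℝ (Fin N), ∀ β : ℝ, 0 ≤ β → β ≤ 1 →
      F (β • x + (1 - β) • y) ≤
        β * F x + (1 - β) * F y - lamF * β * (1 - β) / 2 * ‖x - y‖ ^ 2)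
    (xstar : EuclideanSpace ℝ (Fin N)) (hmin : ∀ y, F xstar ≤ F y)
    (x : EuclideanSpace ℝ (Fin N)) (hx : x ≠ xstar)
    (ξ : ℝ) (hξ : ξ = F x - F xstar) :
    ∃ y : EuclideanSpace ℝ (Fin N),
      ⟪gradient f x, y⟫ + L / 2 * ‖y‖ ^ 2 + g (x + y) - g x ≤
        -min (ξ / 2)
          ((ξ + lamF / 2 * ‖x - xstar‖ ^ 2) ^ 2 /
            (2 * (lamF - lamf + L) * ‖x - xstar‖ ^ 2)) := by
  have hξ0 : 0 ≤ ξ := by rw [hξ]; linarith [hmin x]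
  have hd : (xstar - x : EuclideanSpace ℝ (Fin N)) = xstar - x := rfl
  set d : EuclideanSpace ℝ (Fin N) := xstar - x with hdd
  have hxd : ‖x - xstar‖ = ‖d‖ := by rw [hdd, norm_sub_rev]
  have hnd : 0 < ‖d‖ := by
    rw [norm_pos_iff]
    intro h
    exact hx (sub_eq_zero.mp h).symm
  have hnd2 : 0 < ‖d‖ ^ 2 := by positivity
  obtain ⟨a, ha⟩ : ∃ a : ℝ, a = ξ + lamF / 2 * ‖d‖ ^ 2 := ⟨_, rfl⟩
  obtain ⟨b, hb⟩ : ∃ b : ℝ, b = (lamF - lamf + L) / 2 * ‖d‖ ^ 2 := ⟨_, rfl⟩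
  have hb0 : 0 < b := by rw [hb]; apply mul_pos _ hnd2; linarith
  have hlamd : 0 ≤ lamF / 2 * ‖d‖ ^ 2 := by positivity
  have ha0 : 0 ≤ a := by rw [ha]; linarith
  obtain ⟨β, hβ⟩ : ∃ β : ℝ, β = min 1 (a / (2 * b)) := ⟨_, rfl⟩
  have hβ0 : 0 ≤ β := by rw [hβ]; exact le_min zero_le_one (by positivity)
  have hβ1 : β ≤ 1 := by rw [hβ]; exact min_le_left _ _
  refine ⟨β • d, ?_⟩
  have hy : ‖β • d‖ ^ 2 = β ^ 2 * ‖d‖ ^ 2 := by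
    rw [norm_smul, Real.norm_eq_abs, abs_of_nonneg hβ0, mul_pow]
  have h1 := hf x (β • d)
  have h2 := hsc xstar x β hβ0 hβ1
  have hcomb : β • xstar + (1 - β) • x = x + β • d := by
    rw [hdd]; module
  rw [hcomb, hF (x + β • d), hF x, hF xstar, norm_sub_rev, hxd] at h2
  rw [hF x, hF xstar] at hξ
  have key : ⟪gradient f x, β • d⟫ + L / 2 * ‖β • d‖ ^ 2 + g (x + β • d) - g x ≤
      -β * a + β ^ 2 * b := by
    rw [hy, ha, hb, hξ]
    nlinarith [h1, h2, hy]
  refine key.trans ?_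
  rw [hxd]
  have hden : 2 * (lamF - lamf + L) * ‖d‖ ^ 2 = 4 * b := by rw [hb]; ring
  have hnum : (ξ + lamF / 2 * ‖d‖ ^ 2) = a := ha.symm
  rw [hden, hnum]
  by_cases hc : a / (2 * b) ≤ 1
  · have hβval : β = a / (2 * b) := by rw [hβ]; exact min_eq_right hc
    have heq : -β * a + β ^ 2 * b = -(a ^ 2 / (4 * b)) := by
      rw [hβval]; field_simp; ring
    rw [heq]
    exact neg_le_neg (min_le_right _ _)
  · push_neg at hc
    have hβval : β = 1 := by rw [hβ]; exact min_eq_left (le_of_lt hc)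
    have hab : 2 * b < a := by
      have := (lt_div_iff₀ (by linarith : (0:ℝ) < 2 * b)).mp hc
      linarith
    have hξa : ξ ≤ a := by rw [ha]; linarith
    have h3 : -β * a + β ^ 2 * b ≤ -(ξ / 2) := by rw [hβval]; linarith
    exact h3.trans (neg_le_neg (min_le_left _ _))
end

section
/- Let λ_f ≥ 0, λ_F > 0 and L > 0 with λ_F − λ_f + L > 0. Let f : ℝ^N → ℝ be differentiable and satisfy f(x+h) ≥ f(x) + ⟨∇f(x),h⟩ + (λ_f/2)·‖h‖² for all x, h ∈ ℝ^N, let g : ℝ^N → ℝ be any function, and suppose F := f + g is λ_F-strongly convex with global minimizer x*. Then for every x ∈ ℝ^N with x ≠ x* there exists y ∈ ℝ^N such that ⟨∇f(x),y⟩ + (L/2)·‖y‖² + g(x+y) − g(x) ≤ −min{ 1/2, λ_F/(λ_F − λ_f + L) }·(F(x) − F(x*)). Equivalently, the proximal forcing function μ(x) := −L·inf_{y∈ℝ^N}{⟨∇f(x),y⟩ + (L/2)·‖y‖² + g(x+y) − g(x)} / (F(x) − F(x*)) satisfies μ(x) ≥ min{ L/2, L·λ_F/(λ_F − λ_f + L)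 }, i.e. F is strongly Polyak–Łojasiewicz with this parameter. -/
open scoped RealInnerProductSpace

/-- **Theorem 6.15 (strongly convex functions are strongly PL).** If `f` is
`λ_f`-strongly convex (first-order form) and `F = f + g` is `λ_F`-strongly convex
(`λ_F > 0`) with minimizer `x*`, then for every `x ≠ x*` there is `y` with
`⟨∇f(x),y⟩ + (L/2)‖y‖² + g(x+y) − g(x) ≤ −min{1/2, λ_F/(λ_F−λ_f+L)}·(F(x)−F(x*))`,
i.e. the proximal forcing function is bounded below by `min{L/2, Lλ_F/(λ_F−λ_f+L)}`. -/
theorem stmt_17 (N : ℕ) (lamf lamF L : ℝ) (hlamf : 0 ≤ lamf) (hlamF : 0 < lamF)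
    (hL : 0 < L) (hpos : 0 < lamF - lamf + L)
    (f g : EuclideanSpace ℝ (Fin N) → ℝ) (hdiff : Differentiable ℝ f)
    (hf : ∀ x h : EuclideanSpace ℝ (Fin N),
      f x + ⟪gradient f x, h⟫ + lamf / 2 * ‖h‖ ^ 2 ≤ f (x + h))
    (F : EuclideanSpace ℝ (Fin N) → ℝ) (hF : ∀ x, F x = f x + g x)
    (hsc : ∀ x y : EuclideanSpace ℝ (Fin N), ∀ β : ℝ, 0 ≤ β → β ≤ 1 →
      F (β • x + (1 - β) • y) ≤
        β * F x + (1 - β) * F y - lamF * β * (1 - β) / 2 * ‖x - y‖ ^ 2)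
    (xstar : EuclideanSpace ℝ (Fin N)) (hmin : ∀ y, F xstar ≤ F y) :
    ∀ x : EuclideanSpace ℝ (Fin N), x ≠ xstar →
      ∃ y : EuclideanSpace ℝ (Fin N),
        ⟪gradient f x, y⟫ + L / 2 * ‖y‖ ^ 2 + g (x + y) - g x ≤
          -(min (1 / 2) (lamF / (lamF - lamf + L)) * (F x - F xstar)) := by
  intro x hx
  set β : ℝ := min 1 (lamF / (lamF - lamf + L)) with hβdef
  have hβ0 : 0 ≤ β := le_min zero_le_one (by positivity)
  have hβ1 : β ≤ 1 := min_le_left _ _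
  have hβle : (lamF - lamf + L) * β ≤ lamF := by
    have h := min_le_right 1 (lamF / (lamF - lamf + L))
    calc (lamF - lamf + L) * β ≤ (lamF - lamf + L) * (lamF / (lamF - lamf + L)) := by
          exact mul_le_mul_of_nonneg_left h (le_of_lt hpos)
      _ = lamF := by field_simp
  refine ⟨β • (xstar - x), ?_⟩
  have hnormy : ‖β • (xstar - x)‖ ^ 2 = β ^ 2 * ‖xstar - x‖ ^ 2 := by
    rw [norm_smul, Real.norm_eq_abs, abs_of_nonneg hβ0, mul_pow]
  have hxy : x + β • (xstar - x) = β • xstar + (1 - β) • x := by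
    module
  have h1 := hf x (β • (xstar - x))
  have h2 := hsc xstar x β hβ0 hβ1
  rw [← hxy] at h2
  rw [hF (x + β • (xstar - x)), hF x, hF xstar] at h2
  have hnn : 0 ≤ F x - F xstar := sub_nonneg.2 (hmin x)
  rw [hF x, hF xstar] at hnn
  have hm : min (1/2 : ℝ) (lamF / (lamF - lamf + L)) ≤ β := by
    apply le_min
    · linarith [min_le_left (1/2:ℝ) (lamF / (lamF - lamf + L))]
    · exact min_le_right _ _
  rw [hF x, hF xstar]
  nlinarith [mul_nonneg (mul_nonneg hβ0 (sub_nonneg.2 hβle)) (sq_nonneg ‖xstar - x‖),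
    mul_nonneg (sub_nonneg.2 hm) hnn, sq_nonneg ‖xstar - x‖, hnormy]
end

section
/- Let f : ℝ^N → ℝ be continuously differentiable with a global minimizer x*, and suppose there exists c > 0 such that ∫_0^1 ‖∇f(x* + t·(x − x*))‖ dt ≤ c·‖∇f(x)‖ for all x ∈ ℝ^N. Then f(x) − f(x*) ≤ c·‖∇f(x)‖·‖x − x*‖ for all x ∈ ℝ^N; that is, f is weakly Polyak–ated with parameter 1/c², i.e. f ∈ W_PL(1/c²). -/
/-! Along the segment from `x*` to `x`, the fundamental theorem of calculus gives
`f x - f x* = ∫₀¹ ⟪∇f(x* + t(x - x*)), x - x*⟫ dt`; Cauchy–Schwarz bounds this by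
`(∫₀¹ ‖∇f(x* + t(x - x*))‖ dt) · ‖x - x*‖`, and the hypothesis bounds the integral by `c‖∇f x‖`. -/

open intervalIntegral
open scoped RealInnerProductSpace

section

variable {E : Type*} [NormedAddCommGroup E] [InnerProductSpace ℝ E] [CompleteSpace E]
  {f : E → ℝ}

theorem ContDiff.continuous_gradient (hf : ContDiff ℝ 1 f) : Continuous (gradient f) :=
  (InnerProductSpace.toDual ℝ E).symm.continuous.comp (hf.continuous_fderiv one_ne_zero)

theorem Differentiable.hasDerivAt_comp_lineMap (hf : Differentiable ℝ f) (x y : E) (t : ℝ) :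
    HasDerivAt (fun s : ℝ => f (y + s • (x - y)))
      (⟪gradient f (y + t • (x - y)), x - y⟫) t := by
  have hline : HasDerivAt (fun s : ℝ => y + s • (x - y)) (x - y) t := by
    simpa using ((hasDerivAt_id t).smul_const (x - y)).const_add y
  rw [inner_gradient_left]
  exact (hf _).hasFDerivAt.comp_hasDerivAt t hline

theorem ContDiff.sub_eq_integral_inner_gradient (hf : ContDiff ℝ 1 f) (x y : E) :
    f x - f y = ∫ t in (0:ℝ)..1, ⟪gradient f (y + t • (x - y)), x - y⟫ := by
  have hcont : Continuous fun t : ℝ => ⟪gradient f (y + t • (x - y)), x - y⟫ :=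
    (hf.continuous_gradient.comp (by fun_prop)).inner continuous_const
  have := integral_eq_sub_of_hasDerivAt
    (fun t _ => (hf.differentiable one_ne_zero).hasDerivAt_comp_lineMap x y t)
    (hcont.intervalIntegrable 0 1)
  simpa using this.symm

theorem ContDiff.sub_le_integral_norm_gradient_mul_norm (hf : ContDiff ℝ 1 f) (x y : E) :
    f x - f y ≤ (∫ t in (0:ℝ)..1, ‖gradient f (y + t • (x - y))‖) * ‖x - y‖ := by
  have hgrad : Continuous fun t : ℝ => gradient f (y + t • (x - y)) :=
    hf.continuous_gradient.comp (by fun_prop)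
  rw [hf.sub_eq_integral_inner_gradient, ← integral_mul_const]
  refine integral_mono_on zero_le_one ?_ ?_ fun t _ => real_inner_le_norm _ _
  · exact (hgrad.inner continuous_const).intervalIntegrable 0 1
  · exact (hgrad.norm.mul continuous_const).intervalIntegrable 0 1

end

theorem stmt_18_general (N : ℕ) (f : EuclideanSpace ℝ (Fin N) → ℝ)
    (hf : ContDiff ℝ 1 f)
    (xstar : EuclideanSpace ℝ (Fin N))
    (c : ℝ) (hc : 0 < c)
    (hint : ∀ x : EuclideanSpace ℝ (Fin N),
      (∫ t in (0:ℝ)..1, ‖gradient f (xstar + t • (x - xstar))‖) ≤ c * ‖gradient f x‖) :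
    ∀ x : EuclideanSpace ℝ (Fin N),
      f x - f xstar ≤ c * ‖gradient f x‖ * ‖x - xstar‖ ∧
      Real.sqrt (1 / c ^ 2) * (f x - f xstar) ≤ ‖gradient f x‖ * ‖x - xstar‖ := by
  intro x
  have hbound : f x - f xstar ≤ c * ‖gradient f x‖ * ‖x - xstar‖ :=
    (hf.sub_le_integral_norm_gradient_mul_norm x xstar).trans
      (mul_le_mul_of_nonneg_right (hint x) (norm_nonneg _))
  have hsqrt : Real.sqrt (1 / c ^ 2) = c⁻¹ := by
    rw [one_div, Real.sqrt_inv, Real.sqrt_sq hc.le]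
  refine ⟨hbound, ?_⟩
  rw [hsqrt, inv_mul_le_iff₀ hc, ← mul_assoc]
  exact hbound

/-- **Proposition 6.22.** If `f` is continuously differentiable with global minimizer `x*`
and `∫₀¹ ‖∇f(x* + t(x − x*))‖ dt ≤ c‖∇f(x)‖` for all `x`, then
`f(x) − f(x*) ≤ c‖∇f(x)‖·‖x − x*‖` for all `x`; that is, `f ∈ W_PL(1/c²)`. -/
theorem stmt_18 (N : ℕ) (f : EuclideanSpace ℝ (Fin N) → ℝ)
    (hf : ContDiff ℝ 1 f)
    (xstar : EuclideanSpace ℝ (Fin N)) (hmin : ∀ y, f xstar ≤ f y)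
    (c : ℝ) (hc : 0 < c)
    (hint : ∀ x : EuclideanSpace ℝ (Fin N),
      (∫ t in (0:ℝ)..1, ‖gradient f (xstar + t • (x - xstar))‖) ≤ c * ‖gradient f x‖) :
    ∀ x : EuclideanSpace ℝ (Fin N),
      f x - f xstar ≤ c * ‖gradient f x‖ * ‖x - xstar‖ ∧
      Real.sqrt (1 / c ^ 2) * (f x - f xstar) ≤ ‖gradient f x‖ * ‖x - xstar‖ :=
  stmt_18_general N f hf xstar c hc hint
end

section
/- Let f : ℝ^N → ℝ be differentiable and L-smooth with L > 0, let x* be a global minimizer of f, let x^0 ∈ ℝ^N with ξ(x^0) := f(x^0) − f(x*) > 0, and let (x^k)_{k≥0} be the gradient descent iterates x^{k+1} := x^k − (1/L)·∇f(x^k). Let ε > 0 and let K be a positive integer with K ≥ (L·ξ(x^0)/ε)·log(ξ(x^0)/ε). Then at least one of the following holds: (i) (1/2)·‖∇f(x^k)‖² ≤ ε for some k ∈ {0,…,K−1}; or (ii) f(x^K) − f(x*) ≤ ε. -/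
open scoped RealInnerProductSpace

/-!
With step size `1/L`, the quadratic upper bound turns each step into a decrease of `f` by at
least `‖∇f‖² / (2L)`. If the gradient condition fails for all `k < K`, every step therefore
lowers the gap `f(xᵏ) - f(x*)` by more than `ε / L`, so after `K` steps it has dropped by
`K ε / L`. Since `log y ≥ 1 - 1/y`, the bound on `K` gives `K ε / L ≥ ξ(x⁰) - ε`, which is (ii).
-/

section DescentLemma

variable {E : Type*} [NormedAddCommGroup E] [InnerProductSpace ℝ E]

theorem le_sub_of_forall_le_add_inner_add_sq {f : E → ℝ} {L : ℝ} (hL : L ≠ 0) {x g : E}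
    (hquad : ∀ h, f (x + h) ≤ f x + ⟪g, h⟫ + L / 2 * ‖h‖ ^ 2) :
    f (x - (1 / L) • g) ≤ f x - ‖g‖ ^ 2 / (2 * L) := by
  have hinner : ⟪g, -((1 / L) • g)⟫ = -(1 / L) * ‖g‖ ^ 2 := by
    rw [inner_neg_right, real_inner_smul_right, real_inner_self_eq_norm_sq]
    ring
  have hnorm : ‖-((1 / L) • g)‖ ^ 2 = (1 / L) ^ 2 * ‖g‖ ^ 2 := by
    rw [norm_neg, norm_smul, mul_pow, Real.norm_eq_abs, sq_abs]
  calc f (x - (1 / L) • g) ≤ f x + ⟪g, -((1 / L) • g)⟫ + L / 2 * ‖-((1 / L) • g)‖ ^ 2 := by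
        simpa only [sub_eq_add_neg] using hquad (-((1 / L) • g))
    _ = f x - ‖g‖ ^ 2 / (2 * L) := by
        rw [hinner, hnorm]
        field_simp
        ring

end DescentLemma

theorem le_sub_mul_of_forall_lt_succ_le {u : ℕ → ℝ} {c : ℝ} {K : ℕ}
    (h : ∀ k < K, u (k + 1) ≤ u k - c) : u K ≤ u 0 - K * c := by
  induction K with
  | zero => simp
  | succ n ih =>
    have hn := ih fun k hk => h k (hk.trans n.lt_succ_self)
    push_cast
    linarith [h n n.lt_succ_self]

theorem Real.sub_le_mul_log_div {a b : ℝ} (ha : 0 < a) (hb : 0 < b) :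
    a - b ≤ a * Real.log (a / b) := by
  have h := Real.one_sub_inv_le_log_of_pos (div_pos ha hb)
  calc a - b = a * (1 - (a / b)⁻¹) := by field_simp
    _ ≤ a * Real.log (a / b) := mul_le_mul_of_nonneg_left h ha.le

theorem stmt_19_general (N : ℕ) (f : EuclideanSpace ℝ (Fin N) → ℝ) (L : ℝ) (hL : 0 < L)
    (hsmooth : ∀ x h : EuclideanSpace ℝ (Fin N),
      f (x + h) ≤ f x + ⟪gradient f x, h⟫ + L / 2 * ‖h‖ ^ 2)
    (xstar : EuclideanSpace ℝ (Fin N))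
    (x : ℕ → EuclideanSpace ℝ (Fin N))
    (hiter : ∀ t, x (t + 1) = x t - (1 / L) • gradient f (x t))
    (ε : ℝ) (hε : 0 < ε) (K : ℕ)
    (hKbig : L * (f (x 0) - f xstar) / ε * Real.log ((f (x 0) - f xstar) / ε) ≤ (K : ℝ)) :
    (∃ k < K, (1 / 2) * ‖gradient f (x k)‖ ^ 2 ≤ ε) ∨ f (x K) - f xstar ≤ ε := by
  refine or_iff_not_imp_left.2 fun hgrad => ?_
  push Not at hgrad
  have hstep : ∀ k < K, f (x (k + 1)) ≤ f (x k) - ε / L := fun k hk => by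
    have hdesc := le_sub_of_forall_le_add_inner_add_sq hL.ne' (hsmooth (x k))
    rw [← hiter] at hdesc
    have hgain : ε / L ≤ ‖gradient f (x k)‖ ^ 2 / (2 * L) := by
      rw [div_le_div_iff₀ hL (by positivity)]
      nlinarith [hgrad k hk]
    linarith
  have hdecay := le_sub_mul_of_forall_lt_succ_le (u := fun k => f (x k)) hstep
  set ξ := f (x 0) - f xstar
  rcases le_or_gt ξ ε with hsmall | hlarge
  · have : 0 ≤ (K : ℝ) * (ε / L) := by positivity
    linarith
  · have hK : ξ - ε ≤ K * (ε / L) :=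
      calc ξ - ε ≤ ξ * Real.log (ξ / ε) := Real.sub_le_mul_log_div (hε.trans hlarge) hε
        _ = ε / L * (L * ξ / ε * Real.log (ξ / ε)) := by field_simp
        _ ≤ ε / L * K := by gcongr
        _ = K * (ε / L) := mul_comm _ _
    linarith

/-- **Theorem 6.20 instantiated for gradient descent in the smooth case.**
If `f` is `L`-smooth with global minimizer `x*`, the gradient descent iterates satisfy:
for `K ≥ (L·ξ(x⁰)/ε)·log(ξ(x⁰)/ε)`, either `(1/2)‖∇f(x^k)‖² ≤ ε` for some `k < K`,
or `f(x^K) − f(x*) ≤ ε`. -/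
theorem stmt_19 (N : ℕ) (f : EuclideanSpace ℝ (Fin N) → ℝ) (L : ℝ) (hL : 0 < L)
    (hdiff : Differentiable ℝ f)
    (hsmooth : ∀ x h : EuclideanSpace ℝ (Fin N),
      f (x + h) ≤ f x + ⟪gradient f x, h⟫ + L / 2 * ‖h‖ ^ 2)
    (xstar : EuclideanSpace ℝ (Fin N)) (hmin : ∀ y, f xstar ≤ f y)
    (x : ℕ → EuclideanSpace ℝ (Fin N))
    (hiter : ∀ t, x (t + 1) = x t - (1 / L) • gradient f (x t))
    (hgap : f xstar < f (x 0))
    (ε : ℝ) (hε : 0 < ε) (K : ℕ) (hK : 0 < K)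
    (hKbig : L * (f (x 0) - f xstar) / ε * Real.log ((f (x 0) - f xstar) / ε) ≤ (K : ℝ)) :
    (∃ k < K, (1 / 2) * ‖gradient f (x k)‖ ^ 2 ≤ ε) ∨ f (x K) - f xstar ≤ ε :=
  stmt_19_general N f L hL hsmooth xstar x hiter ε hε K hKbig
end
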